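/- arXiv:2404.13943 — 12 statements merged into one kernel-verified Lean document; each statement's English description precedes it below -/
import Mathlib

section
/- Let d ≥ 7 and m = d−3. If a hyperbolic polynomial of degree d realizes a couple (Σ_{m,2,2},(u,v,w)) (so u+v+w = d−2 = m+1), then w ≥ m−3 (equivalently, u+v ≤ 4). -/
open Polynomial Finset

/-- A real polynomial `P` of degree `d` defines the sign pattern `Σ_{m,n,q}`:
reading the coefficients from that of `x^d` down to the constant term, the first
`m` are positive, the next `n` are negative and the last `q` are positive
(in particular all `d+1` coefficients are nonzero), where `m + n + q = d + 1`. -/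
def SignPatternMNQ (P : Polynomial ℝ) (d m n q : ℕ) : Prop :=
  m + n + q = d + 1 ∧ 0 < m ∧ 0 < n ∧ 0 < q ∧
  (∀ k, k ≤ d → (d - k < m ∨ m + n ≤ d - k) → 0 < P.coeff k) ∧
  (∀ k, k ≤ d → (m ≤ d - k ∧ d - k < m + n) → P.coeff k < 0)

/-- The couple `(Σ_{m,n,q}, (u,v,w))` is realizable (in degree `d`): there is a
hyperbolic polynomial `P` of degree `d` defining the sign pattern `Σ_{m,n,q}`,
whose roots are exactly two positive numbers `β < α` together with `d - 2`
negative numbers `-γ i`, all moduli being distinct, such that exactly `u` of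
the `γ i` are `< β`, exactly `v` lie in `(β, α)` and exactly `w` are `> α`. -/
def RealizesCouple (d m n q u v w : ℕ) : Prop :=
  ∃ (P : Polynomial ℝ) (α β : ℝ) (γ : Fin (d - 2) → ℝ),
    P.natDegree = d ∧
    SignPatternMNQ P d m n q ∧
    0 < β ∧ β < α ∧
    StrictMono γ ∧ (∀ i, 0 < γ i) ∧ (∀ i, γ i ≠ β ∧ γ i ≠ α) ∧
    P.roots = (α ::ₘ β ::ₘ Multiset.map (fun i => -γ i) Finset.univ.val) ∧
    (Finset.univ.filter (fun i => γ i < β)).card = u ∧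
    (Finset.univ.filter (fun i => β < γ i ∧ γ i < α)).card = v ∧
    (Finset.univ.filter (fun i => α < γ i)).card = w

/-- `(e₁,e₂,e₃,e₄)` of the multiset `{-a} ∪ l`. -/
def esymD (a : ℝ) : List ℝ → ℝ × ℝ × ℝ × ℝ
  | [] => (-a, 0, 0, 0)
  | t :: l =>
    ((esymD a l).1 + t, (esymD a l).2.1 + t * (esymD a l).1,
     (esymD a l).2.2.1 + t * (esymD a l).2.1, (esymD a l).2.2.2 + t * (esymD a l).2.2.1)

def INVD (q : ℝ × ℝ × ℝ × ℝ) : Prop :=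
  0 < q.1 ∧ 0 ≤ q.2.1 ∧ 0 ≤ q.2.2.1 ∧ q.2.2.1 ≤ q.1 * q.2.1 ∧
    q.2.2.2 ≤ q.2.1 ^ 2 ∧ q.1 * q.2.2.2 ≤ q.2.1 * q.2.2.1

lemma INVD_cons (a t : ℝ) (l : List ℝ) (ht : 0 < t) (h : INVD (esymD a l)) :
    INVD (esymD a (t :: l)) := by
  obtain ⟨h1, h2, h3, h4, h5, h6⟩ := h
  set d1 := (esymD a l).1 with hd1
  set d2 := (esymD a l).2.1 with hd2
  set d3 := (esymD a l).2.2.1 with hd3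
  set d4 := (esymD a l).2.2.2 with hd4
  refine ⟨by simp [esymD, ← hd1]; nlinarith, ?_, ?_, ?_, ?_, ?_⟩ <;>
    simp only [esymD, INVD, ← hd1, ← hd2, ← hd3, ← hd4]
  · nlinarith
  · nlinarith
  · nlinarith [mul_nonneg ht.le (mul_pos ht h1).le, mul_pos ht h1]
  · nlinarith [mul_nonneg ht.le (sub_nonneg.2 h4), sq_nonneg (t*d1),
      mul_nonneg ht.le (mul_nonneg h1.le h2)]
  · nlinarith [mul_nonneg ht.le (sub_nonneg.2 h5),
      mul_nonneg (mul_nonneg ht.le ht.le) (sub_nonneg.2 h4)]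

lemma esymD_perm (a : ℝ) {l l' : List ℝ} (h : l.Perm l') : esymD a l = esymD a l' := by
  induction h with
  | nil => rfl
  | cons x h ih => simp [esymD, ih]
  | swap x y l =>
      simp only [esymD, Prod.mk.injEq]
      refine ⟨by ring, by ring, by ring, by ring⟩
  | trans h1 h2 ih1 ih2 => rw [ih1, ih2]

set_option maxHeartbeats 1000000 in
lemma INVD_base (a u1 u2 u3 u4 u5 : ℝ) (ha : 0 < a) (h1 : 0 < u1) (h2 : 0 < u2)
    (h3 : 0 < u3) (h4 : 0 < u4) (h5 : 0 < u5) :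
    INVD (esymD a [a+u1, a+u2, a+u3, a+u4, a+u5]) := by
  refine ⟨?_, ?_, ?_, ?_, ?_, ?_⟩ <;> simp only [esymD, INVD]
  · nlinarith
  · rw [← sub_nonneg]; ring_nf; positivity
  · rw [← sub_nonneg]; ring_nf; positivity
  · rw [← sub_nonneg]; ring_nf; positivity
  · rw [← sub_nonneg]; ring_nf; positivity
  · rw [← sub_nonneg]; ring_nf; positivity

lemma key_big (a : ℝ) (ha : 0 < a) : ∀ l : List ℝ, (∀ x ∈ l, a < x) → 5 ≤ l.length →
    INVD (esymD a l) := by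
  intro l
  induction l with
  | nil => intro _ h; simp at h
  | cons t l ih =>
      intro hmem hlen
      by_cases h5 : 5 ≤ l.length
      · exact INVD_cons a t l (ha.trans (hmem t (by simp)))
          (ih (fun x hx => hmem x (by simp [hx])) h5)
      · have h4 : l.length = 4 := by simp at hlen; omega
        match l, h4 with
        | [x1, x2, x3, x4], _ =>
          have hm : ∀ x ∈ [t, x1, x2, x3, x4], a < x := hmem
          have ht := hm t (by simp)
          have hx1 := hm x1 (by simp)
          have hx2 := hm x2 (by simp)
          have hx3 := hm x3 (by simp)
          have hx4 := hm x4 (by simp)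
          rw [show t = a + (t - a) by ring, show x1 = a + (x1 - a) by ring,
            show x2 = a + (x2 - a) by ring, show x3 = a + (x3 - a) by ring,
            show x4 = a + (x4 - a) by ring]
          exact INVD_base a _ _ _ _ _ ha (by linarith) (by linarith) (by linarith)
            (by linarith) (by linarith)

lemma key_all (a : ℝ) (ha : 0 < a) (l : List ℝ) (hpos : ∀ x ∈ l, 0 < x)
    (hbig : 5 ≤ (l.filter (fun x => decide (a < x))).length) : INVD (esymD a l) := by
  classical
  set p : ℝ → Bool := fun x => decide (a < x) with hp
  have hperm : (l.filter (fun x => !p x) ++ l.filter p).Perm l :=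
    (List.perm_append_comm).trans (List.filter_append_perm p l)
  rw [← esymD_perm a hperm]
  have hB : INVD (esymD a (l.filter p)) := by
    apply key_big a ha
    · intro x hx
      have := List.mem_filter.1 hx
      simpa [hp] using this.2
    · exact hbig
  have hS : ∀ x ∈ l.filter (fun x => !p x), 0 < x := by
    intro x hx
    exact hpos x (List.mem_filter.1 hx).1
  revert hS
  induction l.filter (fun x => !p x) with
  | nil => intro _; simpa using hB
  | cons t s ih =>
      intro hS
      exact INVD_cons a t _ (hS t (by simp))
        (ih (fun x hx => hS x (by simp [hx])))

lemma lin_factor (t : ℝ) (ht : t ≠ 0) : X + C t = C t * (1 + C t⁻¹ * X) := by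
  rw [mul_add, mul_one, ← mul_assoc, ← C_mul, mul_inv_cancel₀ ht, C_1, one_mul, add_comm]

lemma coeff_lin_mul (c : ℝ) (p : Polynomial ℝ) (k : ℕ) :
    ((1 + C c * X) * p).coeff (k+1) = p.coeff (k+1) + c * p.coeff k := by
  rw [add_mul, one_mul, coeff_add, mul_assoc, coeff_C_mul, coeff_X_mul]

lemma coeff_lin_mul0 (c : ℝ) (p : Polynomial ℝ) :
    ((1 + C c * X) * p).coeff 0 = p.coeff 0 := by
  rw [add_mul, one_mul, coeff_add, mul_assoc, coeff_C_mul, coeff_X_mul_zero, mul_zero, add_zero]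

lemma coeff_lin_mul1 (c : ℝ) (p : Polynomial ℝ) :
    ((1 + C c * X) * p).coeff 1 = p.coeff 1 + c * p.coeff 0 := by
  rw [show (1:ℕ) = 0 + 1 from rfl, coeff_lin_mul]

lemma coeff_lin_mul2 (c : ℝ) (p : Polynomial ℝ) :
    ((1 + C c * X) * p).coeff 2 = p.coeff 2 + c * p.coeff 1 := by
  rw [show (2:ℕ) = 1 + 1 from rfl, coeff_lin_mul]

lemma coeff_lin_mul3 (c : ℝ) (p : Polynomial ℝ) :
    ((1 + C c * X) * p).coeff 3 = p.coeff 3 + c * p.coeff 2 := by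
  rw [show (3:ℕ) = 2 + 1 from rfl, coeff_lin_mul]

lemma coeff_lin_mul4 (c : ℝ) (p : Polynomial ℝ) :
    ((1 + C c * X) * p).coeff 4 = p.coeff 4 + c * p.coeff 3 := by
  rw [show (4:ℕ) = 3 + 1 from rfl, coeff_lin_mul]

lemma coeffU (a : ℝ) : ∀ l : List ℝ,
    ((1 + C (-a) * X) * (l.map fun t => 1 + C t * X).prod).coeff 0 = 1 ∧
    ((1 + C (-a) * X) * (l.map fun t => 1 + C t * X).prod).coeff 1 = (esymD a l).1 ∧
    ((1 + C (-a) * X) * (l.map fun t => 1 + C t * X).prod).coeff 2 = (esymD a l).2.1 ∧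
    ((1 + C (-a) * X) * (l.map fun t => 1 + C t * X).prod).coeff 3 = (esymD a l).2.2.1 ∧
    ((1 + C (-a) * X) * (l.map fun t => 1 + C t * X).prod).coeff 4 = (esymD a l).2.2.2 := by
  intro l
  induction l with
  | nil =>
      simp only [List.map_nil, List.prod_nil, mul_one, esymD]
      norm_num [coeff_add, coeff_C_mul, coeff_X, coeff_one]
  | cons t l ih =>
      obtain ⟨i0, i1, i2, i3, i4⟩ := ih
      rw [List.map_cons, List.prod_cons, mul_left_comm]
      refine ⟨?_, ?_, ?_, ?_, ?_⟩
      · rw [coeff_lin_mul0, i0]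
      · rw [coeff_lin_mul1 t, i0, i1]; simp [esymD]; try ring
      · rw [coeff_lin_mul2 t, i1, i2]; simp [esymD]; try ring
      · rw [coeff_lin_mul3 t, i2, i3]; simp [esymD]; try ring
      · rw [coeff_lin_mul4 t, i3, i4]; simp [esymD]; try ring

/-- Theorem 1 (1). -/
theorem stmt0 (d u v w : ℕ) (hd : 7 ≤ d) (huvw : u + v + w = d - 2)
    (h : RealizesCouple d (d - 3) 2 2 u v w) :
    d - 3 - 3 ≤ w := by
  classical
  by_contra hw
  push_neg at hw
  obtain ⟨P, α, β, γ, hdeg, hsp, hβ, hβα, hmono, hγpos, hγne, hroots, hu, hv, hwc⟩ := h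
  obtain ⟨hmnq, _, _, _, hplus, hminus⟩ := hsp
  have hα : 0 < α := hβ.trans hβα
  -- coefficient signs
  have hc2 : P.coeff 2 < 0 := hminus 2 (by omega) ⟨by omega, by omega⟩
  have hc4 : 0 < P.coeff 4 := hplus 4 (by omega) (Or.inl (by omega))
  have hcd : 0 < P.coeff d := hplus d (by omega) (Or.inl (by omega))
  -- factorization
  have hcard : P.roots.card = P.natDegree := by
    rw [hroots, hdeg, Multiset.card_cons, Multiset.card_cons, Multiset.card_map,
      ← Finset.card_def, Finset.card_univ, Fintype.card_fin]
    omega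
  have hfac := Polynomial.C_leadingCoeff_mul_prod_multiset_X_sub_C hcard
  rw [hroots] at hfac
  set c := P.leadingCoeff with hc
  have hcpos : 0 < c := by
    rw [hc, Polynomial.leadingCoeff, hdeg]; exact hcd
  set a := α⁻¹ with ha'
  set b := β⁻¹ with hb'
  have ha : 0 < a := inv_pos.2 hα
  have hb : 0 < b := inv_pos.2 hβ
  set δ : Fin (d - 2) → ℝ := fun i => (γ i)⁻¹ with hδ
  set Γ : ℝ := (Multiset.map γ Finset.univ.val).prod with hΓ
  have hΓpos : 0 < Γ := by
    rw [hΓ, ← Finset.prod_eq_multiset_prod]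
    exact Finset.prod_pos (fun i _ => hγpos i)
  set l : List ℝ := (Multiset.map δ Finset.univ.val).toList with hl
  have hlcoe : (↑l : Multiset ℝ) = Multiset.map δ Finset.univ.val := Multiset.coe_toList _
  have hlpos : ∀ x ∈ l, 0 < x := by
    intro x hx
    rw [← Multiset.mem_coe, hlcoe] at hx
    obtain ⟨i, _, rfl⟩ := Multiset.mem_map.1 hx
    exact inv_pos.2 (hγpos i)
  -- rewrite factorization
  have e1 : X - C α = C (-α) * (1 + C (-a) * X) := by
    rw [ha', ← inv_neg, ← lin_factor (-α) (neg_ne_zero.2 hα.ne'), map_neg, sub_eq_add_neg]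
  have e2 : X - C β = C (-β) * (1 + C (-b) * X) := by
    rw [hb', ← inv_neg, ← lin_factor (-β) (neg_ne_zero.2 hβ.ne'), map_neg, sub_eq_add_neg]
  have hmapγ : Multiset.map (fun r => X - C r) (Multiset.map (fun i => -γ i) Finset.univ.val)
      = Multiset.map (fun i => C (γ i) * (1 + C (δ i) * X)) Finset.univ.val := by
    rw [Multiset.map_map]
    apply Multiset.map_congr rfl
    intro i _
    show X - C (-γ i) = _
    rw [map_neg, sub_neg_eq_add, lin_factor (γ i) (hγpos i).ne']
  have hCΓ : (Multiset.map (fun i => C (γ i)) Finset.univ.val).prod = C Γ := by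
    have h1 : Multiset.map (fun i => C (γ i)) Finset.univ.val
        = Multiset.map C (Multiset.map γ Finset.univ.val) := by
      rw [Multiset.map_map]; rfl
    rw [h1, hΓ, ← map_multiset_prod]
  have hW : (Multiset.map (fun i => 1 + C (δ i) * X) Finset.univ.val).prod
      = ((l.map fun t => 1 + C t * X)).prod := by
    have h1 : Multiset.map (fun i => 1 + C (δ i) * X) Finset.univ.val
        = Multiset.map (fun t => 1 + C t * X) (Multiset.map δ Finset.univ.val) := by
      rw [Multiset.map_map]; rfl
    rw [h1, ← hlcoe, Multiset.map_coe, Multiset.prod_coe]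
  have hPfac : P = C (c * (α * β * Γ)) *
      ((1 + C (-b) * X) * ((1 + C (-a) * X) * (l.map fun t => 1 + C t * X).prod)) := by
    rw [← hfac, Multiset.map_cons, Multiset.map_cons, Multiset.prod_cons, Multiset.prod_cons,
      hmapγ, Multiset.prod_map_mul, hCΓ, hW, e1, e2]
    simp only [map_mul, map_neg]
    ring
  set K := c * (α * β * Γ) with hK
  have hKpos : 0 < K := by positivity
  set U := (1 + C (-a) * X) * (l.map fun t => 1 + C t * X).prod with hU
  obtain ⟨i0, i1, i2, i3, i4⟩ := coeffU a l
  -- the two coefficient inequalities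
  have hP2 : P.coeff 2 = K * ((esymD a l).2.1 + (-b) * (esymD a l).1) := by
    rw [hPfac, coeff_C_mul, coeff_lin_mul2 (-b) U, i1, i2]
  have hP4 : P.coeff 4 = K * ((esymD a l).2.2.2 + (-b) * (esymD a l).2.2.1) := by
    rw [hPfac, coeff_C_mul, coeff_lin_mul4 (-b) U, i3, i4]
  have h2 : (esymD a l).2.1 + (-b) * (esymD a l).1 < 0 := by
    rw [hP2] at hc2
    rcases mul_neg_iff.1 hc2 with ⟨_, h⟩ | ⟨h, _⟩
    · exact h
    · exact absurd hKpos (not_lt.2 h.le)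
  have h4 : 0 < (esymD a l).2.2.2 + (-b) * (esymD a l).2.2.1 := by
    rw [hP4] at hc4
    rcases mul_pos_iff.1 hc4 with ⟨_, h⟩ | ⟨h, _⟩
    · exact h
    · exact absurd hKpos (not_lt.2 h.le)
  -- the count of large moduli
  have hcount' : 5 ≤ (Finset.filter (fun i => γ i < α) Finset.univ).card := by
    have hdisj : Disjoint (Finset.filter (fun i => γ i < β) Finset.univ)
        (Finset.filter (fun i => β < γ i ∧ γ i < α) Finset.univ) := by
      rw [Finset.disjoint_left]
      intro i hi1 hi2
      exact absurd ((Finset.mem_filter.1 hi2).2.1) (not_lt.2 (Finset.mem_filter.1 hi1).2.le)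
    have hsub : (Finset.filter (fun i => γ i < β) Finset.univ ∪
        Finset.filter (fun i => β < γ i ∧ γ i < α) Finset.univ) ⊆
        Finset.filter (fun i => γ i < α) Finset.univ := by
      intro i hi
      rcases Finset.mem_union.1 hi with hi | hi
      · exact Finset.mem_filter.2 ⟨Finset.mem_univ i, (Finset.mem_filter.1 hi).2.trans hβα⟩
      · exact Finset.mem_filter.2 ⟨Finset.mem_univ i, (Finset.mem_filter.1 hi).2.2⟩
    have huv : 5 ≤ u + v := by omega
    calc 5 ≤ u + v := huv
      _ = (Finset.filter (fun i => γ i < β) Finset.univ).card +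
          (Finset.filter (fun i => β < γ i ∧ γ i < α) Finset.univ).card := by rw [hu, hv]
      _ = ((Finset.filter (fun i => γ i < β) Finset.univ) ∪
          (Finset.filter (fun i => β < γ i ∧ γ i < α) Finset.univ)).card :=
          (Finset.card_union_of_disjoint hdisj).symm
      _ ≤ _ := Finset.card_le_card hsub
  have hcount : 5 ≤ (l.filter (fun x => decide (a < x))).length := by
    have h1 : ((l.filter (fun x => decide (a < x))).length : ℕ)
        = Multiset.card (Multiset.filter (fun x => a < x) (↑l : Multiset ℝ)) := by
      rw [Multiset.filter_coe, Multiset.coe_card]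
    rw [h1, hlcoe, Multiset.filter_map, Multiset.card_map]
    have h2' : Multiset.filter ((fun x => a < x) ∘ δ) Finset.univ.val
        = Multiset.filter (fun i => γ i < α) Finset.univ.val := by
      apply Multiset.filter_congr
      intro i _
      show a < δ i ↔ γ i < α
      rw [ha', hδ]
      exact inv_lt_inv₀ hα (hγpos i)
    rw [h2', ← Finset.filter_val, ← Finset.card_def]
    exact hcount'
  obtain ⟨hI1, hI2, hI3, hI4, hI5, hI6⟩ := key_all a ha l hlpos hcount
  nlinarith [mul_nonneg (by linarith : (0:ℝ) ≤ b * (esymD a l).1 - (esymD a l).2.1) hI3,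
    mul_pos hI1 (by linarith : (0:ℝ) < (esymD a l).2.2.2 - b * (esymD a l).2.2.1)]
end

section
/- Let d ≥ 6 and m = d−3. For every pair of nonnegative integers (u,v) with u+v ≤ 3, the couple (Σ_{m,2,2},(u,v,m+1−u−v)) is realizable, and moreover the couple (Σ_{m,2,2},(0,4,m−3)) is realizable; that is, for each of these eleven triples there exists a hyperbolic polynomial of degree d realizing it. -/
open Polynomial Finset

/-!
Multiplying a polynomial that defines `Σ_{m,n,q}` by `X + g` gives coefficients
`P_{k-1} + g P_k`; once `g` is large these have the signs of the `P_k`, and the new leading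
coefficient is `P_d > 0`, so the product defines `Σ_{m+1,n,q}`. Taking `g` also larger than `α`
and all `γ i` adds one negative root beyond every other modulus, raising only `w`. Hence it
suffices to realize the eleven couples in degree `6`, which is done with explicit rational roots
whose Vieta coefficients have the signs `+ + + - - + +`.
-/

open Filter

theorem StrictMono.fin_snoc {α : Type*} [Preorder α] {n : ℕ} {f : Fin n → α} {a : α}
    (hf : StrictMono f) (ha : ∀ i, f i < a) : StrictMono (Fin.snoc f a : Fin (n + 1) → α) := by
  intro i j hij
  induction j using Fin.lastCases with
  | last =>
    induction i using Fin.lastCases with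
    | last => exact absurd hij (lt_irrefl _)
    | cast i => simpa using ha i
  | cast j =>
    induction i using Fin.lastCases with
    | last => exact absurd hij (not_lt.2 (Fin.le_last _))
    | cast i => simpa using hf (Fin.castSucc_lt_castSucc_iff.1 hij)

theorem eventually_coeff_mul_X_add_C_mul_coeff_pos (P : ℝ[X]) {k : ℕ} (hk : P.coeff k ≠ 0) :
    ∀ᶠ g in atTop, 0 < (P * (X + C g)).coeff k * P.coeff k := by
  have hcoeff : ∀ g, (P * (X + C g)).coeff k * P.coeff k
      = (P * X).coeff k * P.coeff k + g * P.coeff k ^ 2 := fun g => by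
    rw [mul_add, coeff_add, coeff_mul_C]; ring
  simp only [hcoeff]
  exact (tendsto_atTop_add_const_left _ _
    (tendsto_id.atTop_mul_const (sq_pos_of_ne_zero hk))).eventually_gt_atTop 0

namespace SignPatternMNQ

variable {P : ℝ[X]} {d m n q : ℕ}

theorem coeff_ne_zero (hP : SignPatternMNQ P d m n q) {k : ℕ} (hk : k ≤ d) : P.coeff k ≠ 0 := by
  obtain ⟨-, -, -, -, hpos, hneg⟩ := hP
  by_cases h : d - k < m ∨ m + n ≤ d - k
  · exact (hpos k hk h).ne'
  · exact (hneg k hk (by omega)).ne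

theorem eventually_mul_X_add_C (hP : SignPatternMNQ P d m n q) (hdeg : P.natDegree ≤ d) :
    ∀ᶠ g in atTop, SignPatternMNQ (P * (X + C g)) (d + 1) (m + 1) n q := by
  have hsign := (eventually_all_finset (range (d + 1))).2 fun k hk =>
    eventually_coeff_mul_X_add_C_mul_coeff_pos P (hP.coeff_ne_zero (mem_range_succ_iff.1 hk))
  filter_upwards [hsign] with g hg
  obtain ⟨hsum, hm, hn, hq, hpos, hneg⟩ := hP
  have htop : (P * (X + C g)).coeff (d + 1) = P.coeff d := by
    rw [mul_add, coeff_add, coeff_mul_X, coeff_mul_C,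
      coeff_eq_zero_of_natDegree_lt (show P.natDegree < d + 1 by omega), zero_mul, add_zero]
  refine ⟨by omega, by omega, hn, hq, fun k hk hkpos => ?_, fun k hk hkneg => ?_⟩
  · rcases (by omega : k = d + 1 ∨ k ≤ d) with rfl | hkd
    · exact htop ▸ hpos d le_rfl (by omega)
    · exact pos_of_mul_pos_left (hg k (mem_range_succ_iff.2 hkd)) (hpos k hkd (by omega)).le
  · have hkd : k ≤ d := by omega
    exact neg_of_mul_pos_left (hg k (mem_range_succ_iff.2 hkd)) (hneg k hkd (by omega)).le

end SignPatternMNQ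

namespace RealizesCouple

variable {d m n q u v w : ℕ}

theorem add_largest_root (h : RealizesCouple (d + 2) m n q u v w) :
    RealizesCouple (d + 3) (m + 1) n q u v (w + 1) := by
  unfold RealizesCouple at h ⊢
  -- `Fin (d + 2 - 2)` is `Fin d` only up to defeq; the `Fin.snoc` lemmas need the syntactic form.
  rw [show d + 2 - 2 = d from rfl] at h
  rw [show d + 3 - 2 = d + 1 from rfl]
  obtain ⟨P, α, β, γ, hdeg, hP, hβ, hβα, hγ, hγpos, hne, hroots, hu, hv, hw⟩ := h
  obtain ⟨g, hgP, hαg, hγg⟩ := ((hP.eventually_mul_X_add_C hdeg.le).and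
    ((eventually_gt_atTop α).and (eventually_all.2 fun i => eventually_gt_atTop (γ i)))).exists
  have hP0 : P ≠ 0 := by rintro rfl; simp at hdeg
  have hβg : β < g := hβα.trans hαg
  refine ⟨P * (X + C g), α, β, Fin.snoc γ g, ?_, hgP, hβ, hβα, hγ.fin_snoc hγg,
    ?_, ?_, ?_, ?_, ?_, ?_⟩
  · rw [natDegree_mul hP0 (X_add_C_ne_zero g), hdeg, natDegree_X_add_C]
  · simpa [Fin.forall_fin_succ'] using ⟨hγpos, hβ.trans hβg⟩
  · simpa [Fin.forall_fin_succ'] using ⟨hne, hβg.ne', hαg.ne'⟩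
  · rw [roots_mul (mul_ne_zero hP0 (X_add_C_ne_zero g)), hroots, roots_X_add_C,
      Fin.univ_castSuccEmb, add_comm, Multiset.singleton_add]
    simp only [cons_val, Multiset.map_cons, map_val, Multiset.map_map, Function.comp_def,
      Fin.coe_castSuccEmb, Fin.snoc_last, Fin.snoc_castSucc, Multiset.cons_swap (-g)]
  · rw [card_filter, Fin.sum_univ_castSucc, ← hu, card_filter]
    simp [hβg.le]
  · rw [card_filter, Fin.sum_univ_castSucc, ← hv, card_filter]
    simp [hαg.le]
  · rw [card_filter, Fin.sum_univ_castSucc, ← hw, card_filter]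
    simp [hαg]

theorem add_largest_roots (h : RealizesCouple (d + 2) m n q u v w) (k : ℕ) :
    RealizesCouple (d + k + 2) (m + k) n q u v (w + k) := by
  induction k with
  | zero => exact h
  | succ k ih => exact ih.add_largest_root

end RealizesCouple

theorem realizesCouple_of_roots {d m n q u v w : ℕ} {α β : ℝ} {γ : Fin d → ℝ}
    (hβ : 0 < β) (hβα : β < α) (hγ : StrictMono γ) (hγpos : ∀ i, 0 < γ i)
    (hne : ∀ i, γ i ≠ β ∧ γ i ≠ α)
    (hP : SignPatternMNQ ((X - C α) * (X - C β) * ∏ i, (X + C (γ i))) (d + 2) m n q)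
    (hu : #{i | γ i < β} = u) (hv : #{i | β < γ i ∧ γ i < α} = v) (hw : #{i | α < γ i} = w) :
    RealizesCouple (d + 2) m n q u v w := by
  unfold RealizesCouple
  rw [show d + 2 - 2 = d from rfl]
  have hprod : ∏ i, (X + C (γ i)) ≠ 0 := prod_ne_zero_iff.2 fun i _ => X_add_C_ne_zero _
  have hquad : (X - C α) * (X - C β) ≠ 0 := mul_ne_zero (X_sub_C_ne_zero α) (X_sub_C_ne_zero β)
  refine ⟨_, α, β, γ, ?_, hP, hβ, hβα, hγ, hγpos, hne, ?_, hu, hv, hw⟩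
  · rw [natDegree_mul hquad hprod, natDegree_mul (X_sub_C_ne_zero α) (X_sub_C_ne_zero β),
      natDegree_prod _ _ fun i _ => X_add_C_ne_zero _]
    simp [add_comm]
  · rw [roots_mul (mul_ne_zero hquad hprod), roots_mul hquad, roots_prod _ _ hprod]
    simp [Multiset.bind_singleton]

theorem signPatternMNQ_quadratic_mul_quartic {s p e₁ e₂ e₃ e₄ : ℝ} (h₀ : 0 < p * e₄)
    (h₁ : s * e₄ < p * e₃) (h₂ : e₄ + p * e₂ < s * e₃) (h₃ : e₃ + p * e₁ < s * e₂)
    (h₄ : s * e₁ < e₂ + p) (h₅ : s < e₁) :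
    SignPatternMNQ
      ((X ^ 2 - C s * X + C p) * (X ^ 4 + C e₁ * X ^ 3 + C e₂ * X ^ 2 + C e₃ * X + C e₄))
      6 3 2 2 := by
  have hexp : (X ^ 2 - C s * X + C p) * (X ^ 4 + C e₁ * X ^ 3 + C e₂ * X ^ 2 + C e₃ * X + C e₄)
      = C (p * e₄) + C (p * e₃ - s * e₄) * X + C (e₄ - s * e₃ + p * e₂) * X ^ 2
        + C (e₃ - s * e₂ + p * e₁) * X ^ 3 + C (e₂ - s * e₁ + p) * X ^ 4 + C (e₁ - s) * X ^ 5
        + X ^ 6 := by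
    simp only [map_add, map_sub, map_mul]
    ring
  rw [hexp]
  refine ⟨rfl, by norm_num, by norm_num, by norm_num, ?_, ?_⟩ <;> intro k hk hcond <;>
    interval_cases k <;> (try omega) <;>
    simp only [coeff_add, coeff_C_mul, coeff_X_pow, coeff_X, coeff_C] <;> norm_num <;> linarith

theorem realizesCouple_six_of_vieta (α β g₁ g₂ g₃ g₄ : ℝ) {u v w : ℕ} (hβ : 0 < β) (hβα : β < α)
    (hg₁ : 0 < g₁) (hg₁₂ : g₁ < g₂) (hg₂₃ : g₂ < g₃) (hg₃₄ : g₃ < g₄)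
    (hne : ∀ i, ![g₁, g₂, g₃, g₄] i ≠ β ∧ ![g₁, g₂, g₃, g₄] i ≠ α)
    (hc₁ : (α + β) * (g₁ * g₂ * g₃ * g₄)
      < α * β * (g₁ * g₂ * g₃ + g₁ * g₂ * g₄ + g₁ * g₃ * g₄ + g₂ * g₃ * g₄))
    (hc₂ : g₁ * g₂ * g₃ * g₄ + α * β * (g₁ * g₂ + g₁ * g₃ + g₁ * g₄ + g₂ * g₃ + g₂ * g₄ + g₃ * g₄)
      < (α + β) * (g₁ * g₂ * g₃ + g₁ * g₂ * g₄ + g₁ * g₃ * g₄ + g₂ * g₃ * g₄))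
    (hc₃ : g₁ * g₂ * g₃ + g₁ * g₂ * g₄ + g₁ * g₃ * g₄ + g₂ * g₃ * g₄ + α * β * (g₁ + g₂ + g₃ + g₄)
      < (α + β) * (g₁ * g₂ + g₁ * g₃ + g₁ * g₄ + g₂ * g₃ + g₂ * g₄ + g₃ * g₄))
    (hc₄ : (α + β) * (g₁ + g₂ + g₃ + g₄)
      < g₁ * g₂ + g₁ * g₃ + g₁ * g₄ + g₂ * g₃ + g₂ * g₄ + g₃ * g₄ + α * β)
    (hc₅ : α + β < g₁ + g₂ + g₃ + g₄)
    (hu : #{i | ![g₁, g₂, g₃, g₄] i < β} = u)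
    (hv : #{i | β < ![g₁, g₂, g₃, g₄] i ∧ ![g₁, g₂, g₃, g₄] i < α} = v)
    (hw : #{i | α < ![g₁, g₂, g₃, g₄] i} = w) :
    RealizesCouple 6 3 2 2 u v w := by
  have hg₂ := hg₁.trans hg₁₂
  have hg₃ := hg₂.trans hg₂₃
  have hg₄ := hg₃.trans hg₃₄
  have hγ : StrictMono ![g₁, g₂, g₃, g₄] := by
    simp [Fin.strictMono_iff_lt_succ, Fin.forall_fin_succ, hg₁₂, hg₂₃, hg₃₄]
  have hvieta : (X - C α) * (X - C β) * ∏ i, (X + C (![g₁, g₂, g₃, g₄] i))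
      = (X ^ 2 - C (α + β) * X + C (α * β)) * (X ^ 4 + C (g₁ + g₂ + g₃ + g₄) * X ^ 3
        + C (g₁ * g₂ + g₁ * g₃ + g₁ * g₄ + g₂ * g₃ + g₂ * g₄ + g₃ * g₄) * X ^ 2
        + C (g₁ * g₂ * g₃ + g₁ * g₂ * g₄ + g₁ * g₃ * g₄ + g₂ * g₃ * g₄) * X
        + C (g₁ * g₂ * g₃ * g₄)) := by
    simp only [Fin.prod_univ_four, Matrix.cons_val_zero, Matrix.cons_val_one, Matrix.cons_val,
      map_add, map_mul]
    ring
  refine realizesCouple_of_roots hβ hβα hγ (by simp [Fin.forall_fin_succ, hg₁, hg₂, hg₃, hg₄]) hne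
    ?_ hu hv hw
  rw [hvieta]
  have hα : 0 < α := hβ.trans hβα
  exact signPatternMNQ_quadratic_mul_quartic (by positivity) hc₁ hc₂ hc₃ hc₄ hc₅

theorem realizesCouple_six_three_two_two {u v : ℕ} (huv : u + v ≤ 3) :
    RealizesCouple 6 3 2 2 u v (4 - u - v) := by
  have hu : u ≤ 3 := by omega
  have hv : v ≤ 3 := by omega
  interval_cases u <;> interval_cases v <;> (try omega)
  · apply realizesCouple_six_of_vieta (5/2) (7/3) (11/4) (10/3) 5 9 <;>
      norm_num [Fin.forall_fin_succ, Fin.card_filter_univ_succ]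
  · apply realizesCouple_six_of_vieta 4 1 (4/3) 5 (11/2) 6 <;>
      norm_num [Fin.forall_fin_succ, Fin.card_filter_univ_succ]
  · apply realizesCouple_six_of_vieta (4/3) (1/3) (1/2) 1 (3/2) (11/3) <;>
      norm_num [Fin.forall_fin_succ, Fin.card_filter_univ_succ]
  · apply realizesCouple_six_of_vieta (3/2) (1/3) (1/2) 1 (4/3) (11/3) <;>
      norm_num [Fin.forall_fin_succ, Fin.card_filter_univ_succ]
  · apply realizesCouple_six_of_vieta 1 (1/2) (1/3) (4/3) (3/2) (11/3) <;>
      norm_num [Fin.forall_fin_succ, Fin.card_filter_univ_succ]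
  · apply realizesCouple_six_of_vieta (4/3) (1/2) (1/3) 1 (3/2) (11/3) <;>
      norm_num [Fin.forall_fin_succ, Fin.card_filter_univ_succ]
  · apply realizesCouple_six_of_vieta (16/3) 1 (1/2) 4 5 12 <;>
      norm_num [Fin.forall_fin_succ, Fin.card_filter_univ_succ]
  · apply realizesCouple_six_of_vieta 5 (3/2) 1 (4/3) 8 11 <;>
      norm_num [Fin.forall_fin_succ, Fin.card_filter_univ_succ]
  · apply realizesCouple_six_of_vieta 4 (10/3) (3/2) (13/4) (7/2) 33 <;>
      norm_num [Fin.forall_fin_succ, Fin.card_filter_univ_succ]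
  · apply realizesCouple_six_of_vieta 4 (7/2) (8/3) (13/4) (10/3) 42 <;>
      norm_num [Fin.forall_fin_succ, Fin.card_filter_univ_succ]

theorem realizesCouple_six_three_two_two_zero_four_zero : RealizesCouple 6 3 2 2 0 4 0 := by
  apply realizesCouple_six_of_vieta 9 (5/2) 6 (22/3) (31/4) (26/3) <;>
    norm_num [Fin.forall_fin_succ, Fin.card_filter_univ_succ]

/-- Theorem 1 (2): for `d ≥ 6` and `m = d - 3`, the ten couples
`(Σ_{m,2,2}, (u,v,m+1-u-v))` with `u + v ≤ 3`, as well as the couple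
`(Σ_{m,2,2}, (0,4,m-3))`, are realizable. -/
theorem stmt1 (d : ℕ) (hd : 6 ≤ d) :
    (∀ u v : ℕ, u + v ≤ 3 → RealizesCouple d (d - 3) 2 2 u v (d - 2 - u - v)) ∧
    RealizesCouple d (d - 3) 2 2 0 4 (d - 3 - 3) := by
  obtain ⟨k, rfl⟩ : ∃ k, d = 4 + k + 2 := ⟨d - 6, by omega⟩
  rw [show 4 + k + 2 - 3 = 3 + k by omega]
  refine ⟨fun u v huv => ?_, ?_⟩
  · rw [show 4 + k + 2 - 2 - u - v = 4 - u - v + k by omega]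
    exact (realizesCouple_six_three_two_two huv).add_largest_roots k
  · rw [show 3 + k - 3 = 0 + k by omega]
    exact realizesCouple_six_three_two_two_zero_four_zero.add_largest_roots k
end

section
/- Let n ≥ 4 and d = n+3. Every couple (Σ_{2,n,2},(u,v,w)) with u+v+w = n+1 and either w ≥ 5, or w = 4 and v ≥ 1, is non-realizable: no hyperbolic polynomial of degree d realizes such a couple. -/
open Polynomial Finset

lemma sum_powersetCard_one' {ι : Type*} (s : Finset ι) (f : ι → ℝ) :
    ∑ t ∈ s.powersetCard 1, ∏ i ∈ t, f i = ∑ i ∈ s, f i := by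
  rw [Finset.powersetCard_one, Finset.sum_map]
  simp

lemma two_mul_esymm_two' {ι : Type*} [DecidableEq ι] (s : Finset ι) (f : ι → ℝ) :
    2 * ∑ t ∈ s.powersetCard 2, ∏ i ∈ t, f i
      = (∑ i ∈ s, f i) ^ 2 - ∑ i ∈ s, f i * f i := by
  induction s using Finset.induction_on with
  | empty =>
    rw [Finset.powersetCard_eq_empty.2 (by simp)]
    simp
  | @insert a s ha ih =>
    have hdisj : Disjoint (s.powersetCard 2) ((s.powersetCard 1).image (insert a)) := by
      rw [Finset.disjoint_left]
      intro t ht1 ht2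
      obtain ⟨u', hu', rfl⟩ := Finset.mem_image.1 ht2
      exact ha ((Finset.mem_powersetCard.1 ht1).1 (Finset.mem_insert_self a u'))
    have hinj : ∀ x ∈ s.powersetCard 1, ∀ y ∈ s.powersetCard 1,
        insert a x = insert a y → x = y := by
      intro x hx y hy h
      have hax : a ∉ x := fun hax => ha ((Finset.mem_powersetCard.1 hx).1 hax)
      have hay : a ∉ y := fun hay => ha ((Finset.mem_powersetCard.1 hy).1 hay)
      rw [← Finset.erase_insert hax, h, Finset.erase_insert hay]
    rw [Finset.powersetCard_succ_insert ha, Finset.sum_union hdisj, Finset.sum_image hinj,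
      Finset.sum_insert ha, Finset.sum_insert ha]
    have himg : ∑ t ∈ s.powersetCard 1, ∏ i ∈ insert a t, f i
        = f a * ∑ i ∈ s, f i := by
      rw [← sum_powersetCard_one' s f, Finset.mul_sum]
      refine Finset.sum_congr rfl fun t ht => ?_
      have hat : a ∉ t := fun hat => ha ((Finset.mem_powersetCard.1 ht).1 hat)
      rw [Finset.prod_insert hat]
    rw [himg]
    ring_nf
    ring_nf at ih
    linarith [ih]

set_option maxHeartbeats 1000000 in
/-- Proposition 3 (1): for `n ≥ 4` and `d = n + 3`, every couple
`(Σ_{2,n,2}, (u,v,w))` with `u + v + w = n + 1` and either `w ≥ 5`, or `w = 4`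
and `v ≥ 1`, is non-realizable. -/
theorem stmt5 (n u v w : ℕ) (hn : 4 ≤ n) (huvw : u + v + w = n + 1)
    (hw : 5 ≤ w ∨ (w = 4 ∧ 1 ≤ v)) :
    ¬ RealizesCouple (n + 3) 2 n 2 u v w := by
  rintro ⟨P, α, β, γ, hdeg, hsign, hβ, hβα, -, hγpos, -, hroots, -, hv, hwc⟩
  obtain ⟨k, rfl⟩ : ∃ k, n = k + 1 := ⟨n - 1, by omega⟩
  have hα : 0 < α := hβ.trans hβα
  have hcardu : (Finset.univ : Finset (Fin (k + 1 + 3 - 2))).card = k + 1 + 1 := by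
    simp
  -- leading coefficient is positive
  have hlcpos : 0 < P.leadingCoeff := by
    have := hsign.2.2.2.2.1 (k + 1 + 3) le_rfl (by omega)
    rwa [Polynomial.leadingCoeff, hdeg]
  -- the coefficient of x^(d-2) is negative
  have hneg : P.coeff (k + 1 + 1) < 0 :=
    hsign.2.2.2.2.2 (k + 1 + 1) (by omega) (by omega)
  -- factor P
  have hcard : Multiset.card P.roots = P.natDegree := by
    rw [hroots, hdeg]
    simp only [Multiset.card_cons, Multiset.card_map]
    have : Multiset.card (Finset.univ : Finset (Fin (k + 1 + 3 - 2))).val = k + 1 + 1 := hcardu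
    omega
  have hfact := Polynomial.C_leadingCoeff_mul_prod_multiset_X_sub_C hcard
  set R : Polynomial ℝ := ∏ i : Fin (k + 1 + 3 - 2), (X + C (γ i)) with hR
  set S : ℝ := ∑ i : Fin (k + 1 + 3 - 2), γ i with hS
  set E2 : ℝ := ∑ t ∈ (Finset.univ : Finset (Fin (k + 1 + 3 - 2))).powersetCard 2, ∏ i ∈ t, γ i with hE2
  have hprod : (P.roots.map fun a => X - C a).prod = (X - C α) * ((X - C β) * R) := by
    rw [hroots]
    simp only [Multiset.map_cons, Multiset.prod_cons, Multiset.map_map]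
    congr 2
    rw [hR, Finset.prod_eq_multiset_prod]
    congr 1
    refine Multiset.map_congr rfl fun i _ => ?_
    simp [sub_neg_eq_add]
  -- coefficients of R
  have hRtop : R.coeff (k + 1 + 1) = 1 := by
    rw [hR, Finset.prod_X_add_C_coeff _ _ (le_of_eq hcardu.symm)]
    rw [hcardu, show k + 1 + 1 - (k + 1 + 1) = 0 from by omega]
    simp
  have hRS : R.coeff (k + 1) = S := by
    rw [hR, Finset.prod_X_add_C_coeff _ _ (by omega : k + 1 ≤ (Finset.univ : Finset (Fin (k + 1 + 3 - 2))).card)]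
    rw [hcardu, show k + 1 + 1 - (k + 1) = 1 from by omega]
    exact sum_powersetCard_one' _ _
  have hRE : R.coeff k = E2 := by
    rw [hR, Finset.prod_X_add_C_coeff _ _ (by omega : k ≤ (Finset.univ : Finset (Fin (k + 1 + 3 - 2))).card)]
    rw [hcardu, show k + 1 + 1 - k = 2 from by omega]
  -- compute the coefficient
  have hexp : (X - C α) * ((X - C β) * R)
      = X * (X * R) - C (α + β) * (X * R) + C (α * β) * R := by
    simp only [C_add, C_mul]
    ring
  have hcoeffval : P.coeff (k + 1 + 1)
      = P.leadingCoeff * (E2 - (α + β) * S + α * β) := by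
    conv_lhs => rw [← hfact]
    rw [hprod, Polynomial.coeff_C_mul, hexp]
    rw [Polynomial.coeff_add, Polynomial.coeff_sub, Polynomial.coeff_C_mul,
      Polynomial.coeff_C_mul, Polynomial.coeff_X_mul, Polynomial.coeff_X_mul,
      Polynomial.coeff_X_mul, hRtop, hRS, hRE]
    ring
  have hEneg : E2 - (α + β) * S + α * β < 0 := by
    by_contra h
    push_neg at h
    nlinarith [mul_nonneg hlcpos.le h]
  -- the key pointwise bound
  set G : Finset (Fin (k + 1 + 3 - 2)) := Finset.univ.filter (fun i => α < γ i) with hG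
  have hGsum : ∀ t : Finset (Fin (k + 1 + 3 - 2)), t ⊆ G → (t.card : ℝ) * α ≤ ∑ j ∈ t, γ j := by
    intro t ht
    have := Finset.card_nsmul_le_sum t γ α (fun j hj => (Finset.mem_filter.1 (ht hj)).2.le)
    rwa [nsmul_eq_mul] at this
  have hkey : ∀ i : Fin (k + 1 + 3 - 2), 3 * α + β ≤ S - γ i := by
    intro i
    have hSi : S - γ i = ∑ j ∈ Finset.univ.erase i, γ j :=
      (Finset.sum_erase_eq_sub (Finset.mem_univ i)).symm
    rw [hSi]
    have hmono : ∀ t : Finset (Fin (k + 1 + 3 - 2)), t ⊆ Finset.univ.erase i →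
        ∑ j ∈ t, γ j ≤ ∑ j ∈ Finset.univ.erase i, γ j := fun t ht =>
      Finset.sum_le_sum_of_subset_of_nonneg ht (fun j _ _ => (hγpos j).le)
    rcases hw with h5 | ⟨h4, hv1⟩
    · -- w ≥ 5
      have hsub : G.erase i ⊆ Finset.univ.erase i :=
        Finset.erase_subset_erase i (Finset.subset_univ G)
      have hc : 4 ≤ (G.erase i).card := by
        have h1 : G.card - 1 ≤ (G.erase i).card := Finset.pred_card_le_card_erase
        omega
      have : (4 : ℝ) * α ≤ ∑ j ∈ G.erase i, γ j := by
        calc (4 : ℝ) * α ≤ ((G.erase i).card : ℝ) * α := by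
              have : (4 : ℝ) ≤ ((G.erase i).card : ℝ) := by exact_mod_cast hc
              nlinarith
          _ ≤ ∑ j ∈ G.erase i, γ j := hGsum _ (Finset.erase_subset _ _)
      have := hmono _ hsub
      linarith
    · -- w = 4 and v ≥ 1
      obtain ⟨i₀, hi₀⟩ : (Finset.univ.filter (fun i => β < γ i ∧ γ i < α)).Nonempty :=
        Finset.card_pos.1 (by omega)
      obtain ⟨hβi₀, hi₀α⟩ := (Finset.mem_filter.1 hi₀).2
      have hi₀G : i₀ ∉ G := by
        intro h
        exact absurd (Finset.mem_filter.1 h).2 (not_lt.2 hi₀α.le)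
      by_cases hii : i = i₀
      · subst hii
        have hsub : G ⊆ Finset.univ.erase i := by
          intro j hj
          exact Finset.mem_erase.2 ⟨fun h => hi₀G (h ▸ hj), Finset.mem_univ j⟩
        have : (4 : ℝ) * α ≤ ∑ j ∈ G, γ j := by
          calc (4 : ℝ) * α ≤ (G.card : ℝ) * α := by
                have : (4 : ℝ) ≤ (G.card : ℝ) := by exact_mod_cast (by omega : 4 ≤ G.card)
                nlinarith
            _ ≤ ∑ j ∈ G, γ j := hGsum _ le_rfl
        have := hmono _ hsub
        linarith
      · have hi₀e : i₀ ∉ G.erase i := fun h => hi₀G (Finset.mem_of_mem_erase h)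
        have hsub : insert i₀ (G.erase i) ⊆ Finset.univ.erase i := by
          intro j hj
          rcases Finset.mem_insert.1 hj with rfl | hj
          · exact Finset.mem_erase.2 ⟨fun h => hii h.symm, Finset.mem_univ j⟩
          · exact Finset.erase_subset_erase i (Finset.subset_univ G) hj
        have hc : 3 ≤ (G.erase i).card := by
          have h1 : G.card - 1 ≤ (G.erase i).card := Finset.pred_card_le_card_erase
          omega
        have h3 : (3 : ℝ) * α ≤ ∑ j ∈ G.erase i, γ j := by
          calc (3 : ℝ) * α ≤ ((G.erase i).card : ℝ) * α := by
                have : (3 : ℝ) ≤ ((G.erase i).card : ℝ) := by exact_mod_cast hc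
                nlinarith
            _ ≤ ∑ j ∈ G.erase i, γ j := hGsum _ (Finset.erase_subset _ _)
        have hins : ∑ j ∈ insert i₀ (G.erase i), γ j = γ i₀ + ∑ j ∈ G.erase i, γ j :=
          Finset.sum_insert hi₀e
        have := hmono _ hsub
        rw [hins] at this
        linarith
  -- conclude
  have hid : 2 * E2 = S ^ 2 - ∑ i : Fin (k + 1 + 3 - 2), γ i * γ i := two_mul_esymm_two' _ _
  have hne : Nonempty (Fin (k + 1 + 3 - 2)) := ⟨⟨0, by omega⟩⟩
  have hSpos : 0 < S := Finset.sum_pos (fun i _ => hγpos i) Finset.univ_nonempty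
  have hsum : (3 * α + β) * S ≤ ∑ i : Fin (k + 1 + 3 - 2), γ i * (S - γ i) := by
    rw [show (3 * α + β) * S = ∑ i : Fin (k + 1 + 3 - 2), γ i * (3 * α + β) from by
      rw [← Finset.sum_mul, ← hS]; ring]
    exact Finset.sum_le_sum fun i _ =>
      mul_le_mul_of_nonneg_left (hkey i) (hγpos i).le
  have hexpand : ∑ i : Fin (k + 1 + 3 - 2), γ i * (S - γ i) = S ^ 2 - ∑ i : Fin (k + 1 + 3 - 2), γ i * γ i := by
    simp only [mul_sub]
    rw [Finset.sum_sub_distrib, ← Finset.sum_mul, ← hS]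
    ring
  rw [hexpand, ← hid] at hsum
  nlinarith [mul_pos (show (0:ℝ) < α - β from by linarith) hSpos, mul_pos hα hβ]
end

section
/- Let n ≥ 4 and d = n+3. The couple (Σ_{2,n,2},(0,n−2,3)) is non-realizable: no hyperbolic polynomial of degree d realizes it. -/
open Polynomial Finset

/-! By Vieta, `e₂` of the roots equals the ratio of the coefficients of `x^(d-2)` and `x^d`, so it
is negative for `Σ_{2,n,2}`. On the other hand, with roots `α, β, -γ_i`, `S = ∑ γ_i` and
`M = max γ_i`, the identity `2 e₂ = s₁² - p₂` and `p₂(γ) ≤ M S` give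
`2 e₂ ≥ 2αβ + S (S - M - 2(α + β))`, and this is positive: all `γ_i` exceed `β` and three of them
exceed `α`, so the `γ_i` other than the largest sum to more than `2α + 2β`. -/

namespace Multiset

variable {R : Type*} [CommSemiring R]

theorem esymm_two_cons (a : R) (s : Multiset R) :
    (a ::ₘ s).esymm 2 = s.esymm 2 + a * s.sum := by
  simp only [esymm, powersetCard_cons, powersetCard_one, map_add, sum_add, map_map]
  congr 1
  simpa using sum_map_mul_left (s := s) (f := id) (a := a)

theorem sum_sq_eq_sum_map_sq_add_two_mul_esymm_two (s : Multiset R) :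
    s.sum ^ 2 = (s.map (· ^ 2)).sum + 2 * s.esymm 2 := by
  induction s using Multiset.induction_on with
  | empty => simp [esymm, powersetCard_zero_right]
  | cons a s ih =>
    rw [sum_cons, esymm_two_cons, map_cons, sum_cons, add_sq, ih]
    ring

end Multiset

theorem Polynomial.esymm_roots_two_neg {R : Type*} [CommRing R] [LinearOrder R]
    [IsStrictOrderedRing R] {P : R[X]} (hsplit : Multiset.card P.roots = P.natDegree)
    (hdeg : 2 ≤ P.natDegree) (hlc : 0 < P.leadingCoeff) (hcoeff : P.coeff (P.natDegree - 2) < 0) :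
    P.roots.esymm 2 < 0 := by
  rw [coeff_eq_esymm_roots_of_card hsplit (Nat.sub_le _ _), Nat.sub_sub_self hdeg] at hcoeff
  norm_num at hcoeff
  exact neg_of_mul_neg_right hcoeff hlc.le

namespace Finset

variable {ι : Type*} {s : Finset ι}

theorem card_filter_nsmul_add_card_filter_not_nsmul_lt_sum {M : Type*} [AddCommMonoid M]
    [LinearOrder M] [IsOrderedCancelAddMonoid M] (hs : s.Nonempty) {f : ι → M} {a b : M}
    (hb : ∀ i ∈ s, b < f i) :
    #{i ∈ s | a < f i} • a + #{i ∈ s | ¬a < f i} • b < ∑ i ∈ s, f i := by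
  have hlt : ∀ i ∈ s, (if a < f i then a else b) < f i := fun i hi => by
    split_ifs <;> simp_all
  simpa [sum_ite] using sum_lt_sum_of_nonempty hs hlt

theorem sum_sq_le_mul_sum {R : Type*} [CommSemiring R] [PartialOrder R] [IsOrderedRing R]
    {f : ι → R} {c : R} (h0 : ∀ i ∈ s, 0 ≤ f i) (hc : ∀ i ∈ s, f i ≤ c) :
    ∑ i ∈ s, f i ^ 2 ≤ c * ∑ i ∈ s, f i := by
  rw [mul_sum]
  exact sum_le_sum fun i hi => by
    rw [sq]; exact mul_le_mul_of_nonneg_right (hc i hi) (h0 i hi)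

end Finset

theorem two_mul_add_two_mul_lt_sum_erase_last {m : ℕ} (hm : 4 ≤ m) {α β : ℝ} {γ : Fin (m + 1) → ℝ} (hβ : 0 < β)
    (hγ : Monotone γ) (hβγ : ∀ i, β < γ i) (hαγ : #{i | α < γ i} = 3) :
    2 * α + 2 * β < ∑ i ∈ univ.erase (Fin.last m), γ i := by
  have hlast : Fin.last m ∈ ({i | α < γ i} : Finset _) := by
    obtain ⟨j, hj⟩ := card_pos.mp (hαγ ▸ three_pos : 0 < #{i | α < γ i})
    exact mem_filter.mpr ⟨mem_univ _, (mem_filter.mp hj).2.trans_le (hγ (Fin.le_last j))⟩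
  have hbig : #{i ∈ univ.erase (Fin.last m) | α < γ i} = 2 := by
    rw [filter_erase, card_erase_of_mem hlast, hαγ]
  have hsmall : #{i ∈ univ.erase (Fin.last m) | ¬α < γ i} = m - 2 := by
    have := card_filter_add_card_filter_not (s := univ.erase (Fin.last m)) (α < γ ·)
    rw [hbig, card_erase_of_mem (mem_univ _), card_univ, Fintype.card_fin] at this
    omega
  have hne : (univ.erase (Fin.last m)).Nonempty := ⟨0, by simp [Fin.ext_iff]; omega⟩
  have := card_filter_nsmul_add_card_filter_not_nsmul_lt_sum hne (a := α) (fun i _ => hβγ i)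
  rw [hbig, hsmall, two_nsmul, nsmul_eq_mul, Nat.cast_sub (by omega), Nat.cast_two] at this
  have hm' : (4 : ℝ) ≤ m := by exact_mod_cast hm
  nlinarith [mul_le_mul_of_nonneg_right hm' hβ.le]

theorem esymm_two_cons_cons_map_neg_pos {m : ℕ} (hm : 4 ≤ m) {α β : ℝ} {γ : Fin (m + 1) → ℝ} (hβ : 0 < β)
    (hβα : β < α) (hγ : Monotone γ) (hβγ : ∀ i, β < γ i) (hαγ : #{i | α < γ i} = 3) :
    0 < (α ::ₘ β ::ₘ univ.val.map (fun i => -γ i)).esymm 2 := by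
  set S := ∑ i, γ i
  set M := γ (Fin.last m)
  have hγ0 : ∀ i, 0 < γ i := fun i => hβ.trans (hβγ i)
  have hS : 0 < S := sum_pos (fun i _ => hγ0 i) univ_nonempty
  have hsq : ∑ i, γ i ^ 2 ≤ M * S :=
    sum_sq_le_mul_sum (fun i _ => (hγ0 i).le) (fun i _ => hγ (Fin.le_last i))
  have hgap : 2 * α + 2 * β < S - M := by
    have := add_sum_erase univ γ (mem_univ (Fin.last m))
    linarith [two_mul_add_two_mul_lt_sum_erase_last hm hβ hγ hβγ hαγ]
  have key := Multiset.sum_sq_eq_sum_map_sq_add_two_mul_esymm_two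
    (α ::ₘ β ::ₘ univ.val.map (fun i => -γ i))
  simp only [Multiset.sum_cons, Multiset.map_cons, Multiset.map_map, sum_map_val,
    Function.comp_def, sum_neg_distrib, neg_sq] at key
  -- `key` says `(α + β - S)² = α² + β² + ∑ γ_i² + 2 e₂`
  nlinarith [mul_pos hS (sub_pos.mpr hgap), mul_pos (hβ.trans hβα) hβ]

/-- Proposition 3 (2): for `n ≥ 4` and `d = n + 3`, the couple
`(Σ_{2,n,2}, (0, n-2, 3))` is non-realizable. -/
theorem stmt6 (n : ℕ) (hn : 4 ≤ n) :
    ¬ RealizesCouple (n + 3) 2 n 2 0 (n - 2) 3 := by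
  rintro ⟨P, α, β, γ, hdeg, ⟨-, -, -, -, hpos, hneg⟩, hβ, hβα, hγ, -, hne, hroots, hu, -, hw⟩
  have hβγ : ∀ i, β < γ i := fun i =>
    (not_lt.mp (filter_eq_empty_iff.mp (card_eq_zero.mp hu) (mem_univ i))).lt_of_ne' (hne i).1
  have hsplit : Multiset.card P.roots = P.natDegree := by simp [hroots, hdeg]
  have hlc : 0 < P.leadingCoeff := by
    rw [leadingCoeff, hdeg]; exact hpos _ le_rfl (by omega)
  have hcoeff : P.coeff (P.natDegree - 2) < 0 := hneg _ (by omega) (by omega)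
  have he₂ := Polynomial.esymm_roots_two_neg hsplit (by omega) hlc hcoeff
  rw [hroots] at he₂
  exact (esymm_two_cons_cons_map_neg_pos (m := n) hn hβ hβα hγ.monotone hβγ hw).not_gt he₂
end

section
/- Let n ≥ 4 and d = n+3. For every pair of nonnegative integers (u,v) with u+v = n−3, the couple (Σ_{2,n,2},(u,v,4)) is non-realizable: no hyperbolic polynomial of degree d realizes it. -/
open Polynomial Finset

/-!
Write `P = c (x - α)(x - β) ∏ (x + γᵢ)` and rescale so that `α = 1`, with `b = β / α < 1`
and `xᵢ = γᵢ / α`. The coefficients of `x^(d-2)` and of `x²` are both negative, which reads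
`e₂(x) - (1 + b) e₁(x) + b < 0` and `1 - (1 + b) e₁(1/x) + b e₂(1/x) < 0`.
Split the `xᵢ` into the four that exceed `1` and the `m ≥ 1` that do not. Within a group
all `xᵢ - 1`, and all `1/xᵢ - 1`, have the same sign, which bounds `e₂(x)` and `e₂(1/x)` of
the group from below, and `(∑ x)(∑ 1/x) ≥ k²` by Cauchy–Schwarz. The first inequality then
forces `b > 2/3` and lower bounds on `∑ 1/x` over both groups which are too large for the
second one to hold.
-/

variable {ι R : Type*}

section ElementarySymmetric

def esymmTwo [CommSemiring R] (s : Finset ι) (f : ι → R) : R :=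
  ∑ t ∈ s.powersetCard 2, ∏ i ∈ t, f i

section CommRing

variable [CommRing R]

theorem two_mul_esymmTwo (s : Finset ι) (f : ι → R) :
    2 * esymmTwo s f = (∑ i ∈ s, f i) ^ 2 - ∑ i ∈ s, f i ^ 2 := by
  classical
  induction s using Finset.induction_on with
  | empty => simp [esymmTwo, powersetCard_eq_empty.2 (by simp : (∅ : Finset ι).card < 2)]
  | insert a s ha ih =>
    have hdisj : Disjoint (s.powersetCard 2) ((s.powersetCard 1).image (insert a)) := by
      simp only [disjoint_left, mem_powersetCard, mem_image]
      rintro _ ⟨hts, -⟩ ⟨u, -, rfl⟩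
      exact ha (hts (mem_insert_self a u))
    have himage : ∑ t ∈ (s.powersetCard 1).image (insert a), ∏ i ∈ t, f i
        = f a * ∑ i ∈ s, f i := by
      rw [powersetCard_one, map_eq_image, image_image, sum_image, mul_sum]
      · refine sum_congr rfl fun x hx => ?_
        simp [prod_pair (ne_of_mem_of_not_mem hx ha).symm]
      · intro x hx y _ hxy
        simp only [Function.comp_apply, Function.Embedding.coeFn_mk] at hxy
        have : x ∈ ({a, y} : Finset ι) := hxy ▸ by simp
        simpa [(ne_of_mem_of_not_mem hx ha)] using this
    rw [esymmTwo, powersetCard_succ_insert ha, sum_union hdisj, himage, mul_add, ← esymmTwo, ih,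
      sum_insert ha, sum_insert ha]
    ring

theorem esymmTwo_const_mul (s : Finset ι) (f : ι → R) (c : R) :
    esymmTwo s (fun i => c * f i) = c ^ 2 * esymmTwo s f := by
  simp only [esymmTwo, prod_mul_distrib, prod_const, mul_sum]
  exact sum_congr rfl fun t ht => by rw [(mem_powersetCard.1 ht).2]

theorem esymmTwo_neg (s : Finset ι) (f : ι → R) :
    esymmTwo s (fun i => -f i) = esymmTwo s f := by
  simpa using esymmTwo_const_mul s f (-1)

theorem two_mul_esymmTwo_sub_const (s : Finset ι) (f : ι → R) (c : R) :
    2 * esymmTwo s (fun i => f i - c)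
      = 2 * esymmTwo s f - 2 * (#s - 1) * c * ∑ i ∈ s, f i + #s * (#s - 1) * c ^ 2 := by
  simp only [two_mul_esymmTwo, sub_sq, sum_add_distrib, sum_sub_distrib, sum_const, nsmul_eq_mul,
    ← mul_sum, ← sum_mul]
  ring

end CommRing

section LinearOrderedField

variable [Field R] [LinearOrder R] [IsStrictOrderedRing R] {s t : Finset ι} {f : ι → R}

theorem esymmTwo_union [DecidableEq ι] (hst : Disjoint s t) (f : ι → R) :
    esymmTwo (s ∪ t) f = esymmTwo s f + esymmTwo t f + (∑ i ∈ s, f i) * ∑ i ∈ t, f i := by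
  refine mul_left_cancel₀ (two_ne_zero (α := R)) ?_
  rw [mul_add, mul_add, two_mul_esymmTwo, two_mul_esymmTwo, two_mul_esymmTwo, sum_union hst,
    sum_union hst]
  ring

theorem esymmTwo_nonneg (hf : ∀ i ∈ s, 0 ≤ f i) : 0 ≤ esymmTwo s f :=
  sum_nonneg fun _ ht => prod_nonneg fun i hi => hf i ((mem_powersetCard.1 ht).1 hi)

theorem le_esymmTwo_of_le {c : R} (hf : ∀ i ∈ s, c ≤ f i) :
    (#s - 1) * c * ∑ i ∈ s, f i - #s * (#s - 1) / 2 * c ^ 2 ≤ esymmTwo s f := by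
  have h := esymmTwo_nonneg (s := s) (f := fun i => f i - c) fun i hi => sub_nonneg.2 (hf i hi)
  linarith [two_mul_esymmTwo_sub_const s f c]

theorem le_esymmTwo_of_ge {c : R} (hf : ∀ i ∈ s, f i ≤ c) :
    (#s - 1) * c * ∑ i ∈ s, f i - #s * (#s - 1) / 2 * c ^ 2 ≤ esymmTwo s f := by
  have h := esymmTwo_nonneg (s := s) (f := fun i => -(f i - c)) fun i hi => by
    linarith [hf i hi]
  rw [esymmTwo_neg] at h
  linarith [two_mul_esymmTwo_sub_const s f c]

theorem card_sq_le_sum_mul_sum_inv (hf : ∀ i ∈ s, 0 < f i) :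
    (#s : R) ^ 2 ≤ (∑ i ∈ s, f i) * ∑ i ∈ s, (f i)⁻¹ := by
  simpa using sum_sq_le_sum_mul_sum_of_sq_le_mul s (r := fun _ => (1 : R))
    (fun i hi => (hf i hi).le) (fun i hi => (inv_pos.2 (hf i hi)).le)
    (fun i hi => by rw [mul_inv_cancel₀ (hf i hi).ne']; norm_num)

end LinearOrderedField

theorem sum_prod_powersetCard_card_sub [Field R] {s : Finset ι} {f : ι → R}
    (hf : ∀ i ∈ s, f i ≠ 0) {k : ℕ} (hk : k ≤ #s) :
    ∑ t ∈ s.powersetCard (#s - k), ∏ i ∈ t, f i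
      = (∏ i ∈ s, f i) * ∑ t ∈ s.powersetCard k, ∏ i ∈ t, (f i)⁻¹ := by
  classical
  rw [mul_sum]
  refine sum_nbij' (s \ ·) (s \ ·) (fun t ht => ?_) (fun t ht => ?_) (fun t ht => ?_)
    (fun t ht => ?_) (fun t ht => ?_) <;> simp only [mem_powersetCard] at ht ⊢
  · rw [card_sdiff_of_subset ht.1, ht.2]
    exact ⟨sdiff_subset, by omega⟩
  · rw [card_sdiff_of_subset ht.1, ht.2]
    exact ⟨sdiff_subset, by omega⟩
  · exact Finset.sdiff_sdiff_eq_self ht.1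
  · exact Finset.sdiff_sdiff_eq_self ht.1
  · rw [prod_inv_distrib, ← prod_sdiff ht.1, mul_comm (∏ i ∈ s \ t, f i),
      mul_inv_cancel_right₀ (prod_ne_zero_iff.2 fun i hi => hf i (mem_sdiff.1 hi).1)]

end ElementarySymmetric

section Coefficients

theorem coeff_X_sub_C_mul_X_sub_C_mul_add_two [CommRing R] (a b : R) (Q : R[X]) (j : ℕ) :
    ((X - C a) * (X - C b) * Q).coeff (j + 2)
      = Q.coeff j - (a + b) * Q.coeff (j + 1) + a * b * Q.coeff (j + 2) := by
  have h : (X - C a) * (X - C b) * Q = X ^ 2 * Q - C (a + b) * (X ^ 1 * Q) + C (a * b) * Q := by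
    simp only [C_add, C_mul]; ring
  simp only [h, coeff_add, coeff_sub, coeff_C_mul, coeff_X_pow_mul']
  norm_num

theorem coeff_card_X_sub_C_mul_X_sub_C_mul_prod [CommRing R] (a b : R) {s : Finset ι}
    (f : ι → R) (hs : 2 ≤ #s) :
    ((X - C a) * (X - C b) * ∏ i ∈ s, (X + C (f i))).coeff #s
      = esymmTwo s f - (a + b) * ∑ i ∈ s, f i + a * b := by
  obtain ⟨j, hj⟩ : ∃ j, #s = j + 2 := ⟨#s - 2, by omega⟩
  rw [hj, coeff_X_sub_C_mul_X_sub_C_mul_add_two, prod_X_add_C_coeff _ _ (by omega),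
    prod_X_add_C_coeff _ _ (by omega), prod_X_add_C_coeff _ _ (by omega), hj]
  simp [esymmTwo, show j + 2 - j = 2 by omega, show j + 2 - (j + 1) = 1 by omega,
    powersetCard_one]

theorem coeff_two_X_sub_C_mul_X_sub_C_mul_prod [Field R] (a b : R) {s : Finset ι}
    {f : ι → R} (hf : ∀ i ∈ s, f i ≠ 0) (hs : 2 ≤ #s) :
    ((X - C a) * (X - C b) * ∏ i ∈ s, (X + C (f i))).coeff 2
      = (∏ i ∈ s, f i) *
        (1 - (a + b) * ∑ i ∈ s, (f i)⁻¹ + a * b * esymmTwo s fun i => (f i)⁻¹) := by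
  have hcoeff (k : ℕ) (hk : k ≤ #s) : (∏ i ∈ s, (X + C (f i))).coeff k
      = (∏ i ∈ s, f i) * ∑ t ∈ s.powersetCard k, ∏ i ∈ t, (f i)⁻¹ := by
    rw [prod_X_add_C_coeff _ _ hk, ← sum_prod_powersetCard_card_sub hf (by omega)]
  rw [← zero_add 2, coeff_X_sub_C_mul_X_sub_C_mul_add_two, hcoeff 0 (by omega),
    hcoeff 1 (by omega), hcoeff 2 hs]
  simp [esymmTwo, powersetCard_one]
  ring

theorem eq_C_leadingCoeff_mul_of_roots_eq [CommRing R] [IsDomain R] {P : R[X]} {a b : R}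
    {s : Finset ι} {f : ι → R} (hroots : P.roots = a ::ₘ b ::ₘ s.val.map fun i => -f i)
    (hdeg : P.natDegree = #s + 2) :
    P = C P.leadingCoeff * ((X - C a) * (X - C b) * ∏ i ∈ s, (X + C (f i))) := by
  have hcard : Multiset.card P.roots = P.natDegree := by
    simp [hroots, hdeg]
  conv_lhs => rw [← C_leadingCoeff_mul_prod_multiset_X_sub_C hcard, hroots]
  simp only [Multiset.map_cons, Multiset.prod_cons, Multiset.map_map, mul_assoc]
  congr 3
  rw [prod_eq_multiset_prod]
  exact congrArg _ (Multiset.map_congr rfl fun i _ => by simp)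

end Coefficients

section RealInequalities

/- In both lemmas `E` and `T` stand for `∑ x` and `∑ 1/x` over the four large `xᵢ`,
`S₁` and `Y` for the same sums over the `M` small ones. -/

theorem bounds_of_top_coeff_neg {b E T S₁ Y M : ℝ} (hb1 : b < 1) (hE : 4 < E)
    (hET : 16 ≤ E * T) (hS₁ : 0 < S₁) (hY : 0 < Y) (hSY : M ^ 2 ≤ S₁ * Y)
    (htop : 3 * E - 6 + E * S₁ < (1 + b) * (E + S₁) - b) :
    2 / 3 < b ∧ 16 * (2 - b) < (6 - b) * T ∧ (3 - b) * M ^ 2 < (3 * b - 2) * Y := by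
  have hb : 2 / 3 < b := by nlinarith
  have hE' : (2 - b) * E < 6 - b := by nlinarith
  have hS₁' : S₁ * (3 - b) < 3 * b - 2 := by nlinarith
  exact ⟨hb, by nlinarith, by nlinarith⟩

theorem bottom_coeff_nonneg {b T Y M : ℝ} (hb : 2 / 3 < b) (hb1 : b < 1) (hM : M = 1 ∨ 2 ≤ M)
    (hT : 16 * (2 - b) < (6 - b) * T) (hY : (3 - b) * M ^ 2 < (3 * b - 2) * Y) :
    (1 + b) * (T + Y) ≤ b * (3 * T - 6 + (M - 1) * Y - M * (M - 1) / 2 + T * Y) + 1 := by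
  rcases hM with rfl | hM
  · by_contra! hbot
    have hTb : 0 < b * T - 1 - b := by nlinarith
    have hT' : (5 * b ^ 2 - 4 * b + 2) * T < 17 * b ^ 2 - 13 * b + 5 := by
      nlinarith [mul_lt_mul_of_pos_right hY hTb]
    have hq : 0 < 5 * b ^ 2 - 4 * b + 2 := by nlinarith [sq_nonneg (5 * b - 2)]
    nlinarith [mul_lt_mul_of_pos_left hT' (show 0 < 6 - b by linarith),
      mul_lt_mul_of_pos_left hT hq,
      mul_pos (sub_pos.2 hb1)
        (show 0 < 63 * b ^ 2 - 46 * b + 31 by nlinarith [sq_nonneg (63 * b - 23)])]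
  · have hT' : 16 / 5 < T := by nlinarith
    have hY' : 2 * M ^ 2 < Y := by nlinarith
    have hcoef : 2 * M / 3 - 1 / 5 < b * (T + M - 2) - 1 := by nlinarith
    have hrhs : T * (1 - 2 * b) + 6 * b - 1 + b * M * (M - 1) / 2 < 11 / 5 + M * (M - 1) / 2 := by
      nlinarith [mul_pos (show 0 < 2 * b - 1 by linarith) (show 0 < T - 16 / 5 by linarith),
        mul_nonneg (sub_pos.2 hb1).le (show 0 ≤ M * (M - 1) by nlinarith)]
    nlinarith

end RealInequalities

section Core

theorem not_top_coeff_neg_and_bottom_coeff_neg [DecidableEq ι] {B S : Finset ι} {x : ι → ℝ}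
    {b : ℝ} (hb : 0 < b) (hb1 : b < 1) (hBS : Disjoint B S) (hB : #B = 4) (hS : S.Nonempty)
    (hxB : ∀ i ∈ B, 1 < x i) (hxS₀ : ∀ i ∈ S, 0 < x i) (hxS₁ : ∀ i ∈ S, x i < 1) :
    ¬ (esymmTwo (B ∪ S) x - (1 + b) * ∑ i ∈ B ∪ S, x i + b < 0 ∧
      1 - (1 + b) * ∑ i ∈ B ∪ S, (x i)⁻¹ + b * esymmTwo (B ∪ S) (fun i => (x i)⁻¹) < 0) := by
  rintro ⟨htop, hbot⟩
  rw [esymmTwo_union hBS, sum_union hBS] at htop hbot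
  set E := ∑ i ∈ B, x i
  set T := ∑ i ∈ B, (x i)⁻¹
  set S₁ := ∑ i ∈ S, x i
  set Y := ∑ i ∈ S, (x i)⁻¹
  set M : ℝ := (#S : ℝ)
  have hxB₀ : ∀ i ∈ B, 0 < x i := fun i hi => one_pos.trans (hxB i hi)
  have hE : 4 < E := by
    simpa [hB] using sum_lt_sum_of_nonempty (card_pos.1 (by omega)) hxB
  have hET : 16 ≤ E * T := by
    have := card_sq_le_sum_mul_sum_inv hxB₀
    norm_num [hB] at this
    exact this
  have hS₁ : 0 < S₁ := sum_pos hxS₀ hS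
  have hY : 0 < Y := sum_pos (fun i hi => inv_pos.2 (hxS₀ i hi)) hS
  have hSY : M ^ 2 ≤ S₁ * Y := card_sq_le_sum_mul_sum_inv hxS₀
  have heB : 3 * E - 6 ≤ esymmTwo B x := by
    have := le_esymmTwo_of_le (c := 1) fun i hi => (hxB i hi).le
    norm_num [hB] at this
    linarith
  have heS : 0 ≤ esymmTwo S x := esymmTwo_nonneg fun i hi => (hxS₀ i hi).le
  have heB' : 3 * T - 6 ≤ esymmTwo B fun i => (x i)⁻¹ := by
    have := le_esymmTwo_of_ge (c := 1) fun i hi => inv_le_one_of_one_le₀ (hxB i hi).le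
    norm_num [hB] at this
    linarith
  have heS' : (M - 1) * Y - M * (M - 1) / 2 ≤ esymmTwo S fun i => (x i)⁻¹ := by
    have := le_esymmTwo_of_le (c := 1) fun i hi => (one_lt_inv₀ (hxS₀ i hi)).2 (hxS₁ i hi) |>.le
    linarith
  have hM : M = 1 ∨ 2 ≤ M := by
    rcases (show #S = 1 ∨ 2 ≤ #S by have := card_pos.2 hS; omega) with h | h
    · exact Or.inl (by simp [M, h])
    · exact Or.inr (by simp only [M]; exact_mod_cast h)
  obtain ⟨hb23, hT, hYM⟩ := bounds_of_top_coeff_neg hb1 hE hET hS₁ hY hSY (by linarith)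
  have := bottom_coeff_nonneg hb23 hb1 hM hT hYM
  linarith [mul_le_mul_of_nonneg_left heB' hb.le, mul_le_mul_of_nonneg_left heS' hb.le]

theorem not_coeff_card_neg_and_coeff_two_neg {s : Finset ι} {γ : ι → ℝ} {α β : ℝ}
    (hβ : 0 < β) (hβα : β < α) (hγ : ∀ i ∈ s, 0 < γ i) (hγα : ∀ i ∈ s, γ i ≠ α)
    (h4 : #{i ∈ s | α < γ i} = 4) (h5 : 5 ≤ #s) :
    ¬ (((X - C α) * (X - C β) * ∏ i ∈ s, (X + C (γ i))).coeff #s < 0 ∧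
      ((X - C α) * (X - C β) * ∏ i ∈ s, (X + C (γ i))).coeff 2 < 0) := by
  classical
  rintro ⟨htop, hbot⟩
  have hα : 0 < α := hβ.trans hβα
  rw [coeff_card_X_sub_C_mul_X_sub_C_mul_prod _ _ _ (by omega)] at htop
  rw [coeff_two_X_sub_C_mul_X_sub_C_mul_prod _ _ (fun i hi => (hγ i hi).ne') (by omega)] at hbot
  replace hbot := neg_of_mul_neg_right hbot (prod_pos hγ).le
  have hs : {i ∈ s | α < γ i} ∪ {i ∈ s | ¬ α < γ i} = s := filter_union_filter_not_eq _ _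
  have hS : ({i ∈ s | ¬ α < γ i}).Nonempty := by
    have := card_filter_add_card_filter_not (s := s) (fun i => α < γ i)
    exact card_pos.1 (by omega)
  refine not_top_coeff_neg_and_bottom_coeff_neg (x := fun i => γ i / α) (b := β / α)
    (div_pos hβ hα) ((div_lt_one hα).2 hβα) (disjoint_filter_filter_not _ _ _) h4 hS
    (fun i hi => (one_lt_div hα).2 (mem_filter.1 hi).2)
    (fun i hi => div_pos (hγ i (mem_filter.1 hi).1) hα)
    (fun i hi => ?_) ⟨?_, ?_⟩
  · obtain ⟨hi, hγi⟩ := mem_filter.1 hi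
    exact (div_lt_one hα).2 ((not_lt.1 hγi).lt_of_ne (hγα i hi))
  · rw [hs]
    have : esymmTwo s (fun i => γ i / α) - (1 + β / α) * ∑ i ∈ s, γ i / α + β / α
        = (esymmTwo s γ - (α + β) * ∑ i ∈ s, γ i + α * β) / α ^ 2 := by
      simp_rw [div_eq_inv_mul _ α, esymmTwo_const_mul, ← mul_sum]
      field_simp
    rw [this]
    exact div_neg_of_neg_of_pos htop (by positivity)
  · rw [hs]
    have hinv (i : ι) : (γ i / α)⁻¹ = α * (γ i)⁻¹ := by rw [inv_div, div_eq_mul_inv]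
    have : 1 - (1 + β / α) * ∑ i ∈ s, (γ i / α)⁻¹ + β / α * esymmTwo s (fun i => (γ i / α)⁻¹)
        = 1 - (α + β) * ∑ i ∈ s, (γ i)⁻¹ + α * β * esymmTwo s fun i => (γ i)⁻¹ := by
      simp_rw [hinv, esymmTwo_const_mul, ← mul_sum]
      field_simp
    rw [this]
    exact hbot

end Core

theorem stmt7_general (n u v : ℕ) (hn : 4 ≤ n) :
    ¬ RealizesCouple (n + 3) 2 n 2 u v 4 := by
  rintro ⟨P, α, β, γ, hdeg, ⟨-, -, -, -, hpos, hneg⟩, hβ, hβα, -, hγ, hγα, hroots, -, -, h4⟩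
  have hcard : #(univ : Finset (Fin (n + 3 - 2))) = n + 1 := by simp
  have hP := eq_C_leadingCoeff_mul_of_roots_eq hroots (by rw [hdeg, hcard])
  have hlc : 0 < P.leadingCoeff := by
    rw [leadingCoeff, hdeg]
    exact hpos _ le_rfl (by omega)
  refine not_coeff_card_neg_and_coeff_two_neg hβ hβα (fun i _ => hγ i) (fun i _ => (hγα i).2) h4
    (by omega) ⟨?_, ?_⟩
  · have h := hneg (n + 1) (by omega) (by omega)
    rw [hP, coeff_C_mul, ← hcard] at h
    exact neg_of_mul_neg_right h hlc.le
  · have h := hneg 2 (by omega) (by omega)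
    rw [hP, coeff_C_mul] at h
    exact neg_of_mul_neg_right h hlc.le

/-- Proposition 4 (1): for `n ≥ 4` and `d = n + 3`, every couple
`(Σ_{2,n,2}, (u,v,4))` with `u + v = n - 3` is non-realizable. -/
theorem stmt7 (n u v : ℕ) (hn : 4 ≤ n) (huv : u + v = n - 3) :
    ¬ RealizesCouple (n + 3) 2 n 2 u v 4 :=
  stmt7_general n u v hn
end

section
/- The couple (Σ_{2,4,2},(2,0,3)) is not realizable: there is no hyperbolic polynomial of degree 7 with positive roots β<α and negative roots with moduli y_1<y_2<γ_1<γ_2<γ_3 satisfying y_1<y_2<β<α<γ_1, whose sign pattern is Σ_{2,4,2}. -/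
open Polynomial Finset

set_option maxHeartbeats 4000000

lemma key_ineq (al be y1 y2 g1 g2 g3 : ℝ)
    (hy1 : 0 < y1) (h12 : y1 < y2) (h2b : y2 < be) (hba : be < al)
    (hag : al < g1) (hg12 : g1 < g2) (hg23 : g2 < g3)
    (h5 : al*be - al*y1 - al*y2 - al*g1 - al*g2 - al*g3 - be*y1 - be*y2 - be*g1 - be*g2 - be*g3 + y1*y2 + y1*g1 + y1*g2 + y1*g3 + y2*g1 + y2*g2 + y2*g3 + g1*g2 + g1*g3 + g2*g3 < 0)
    (h2 : al*be*y1*y2*g1 + al*be*y1*y2*g2 + al*be*y1*y2*g3 + al*be*y1*g1*g2 + al*be*y1*g1*g3 + al*be*y1*g2*g3 + al*be*y2*g1*g2 + al*be*y2*g1*g3 + al*be*y2*g2*g3 + al*be*g1*g2*g3 - al*y1*y2*g1*g2 - al*y1*y2*g1*g3 - al*y1*y2*g2*g3 - al*y1*g1*g2*g3 - al*y2*g1*g2*g3 - be*y1*y2*g1*g2 - be*y1*y2*g1*g3 - be*y1*y2*g2*g3 - be*y1*g1*g2*g3 - be*y2*g1*g2*g3 + y1*y2*g1*g2*g3 < 0)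 : False := by
  have hy2 : 0 < y2 := by linarith
  have hbe : 0 < be := by linarith
  have hal : 0 < al := by linarith
  have hg1 : 0 < g1 := by linarith
  have hg2 : 0 < g2 := by linarith
  have hg3 : 0 < g3 := by linarith
  have hG1 : 0 < (g1 + g2 + g3) := by linarith
  have hG2 : 0 < (g1*g2 + g1*g3 + g2*g3) := by positivity
  have hG3 : 0 < (g1*g2*g3) := by positivity
  have t1 : 0 < al*y1*(be - y2) := by
    have : 0 < be - y2 := by linarith
    positivity
  have t2 : 0 < be*y2*(al - y1) := by
    have : 0 < al - y1 := by linarith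
    positivity
  have hb1 : 0 < (al*be*(y1 + y2) - (al + be)*(y1*y2)) := by nlinarith [t1, t2]
  have hb0 : 0 < (al*be*(y1*y2)) := by positivity
  have hB : (g1*g2 + g1*g3 + g2*g3) * (al*be*(y1 + y2) - (al + be)*(y1*y2)) + (g1 + g2 + g3) * (al*be*(y1*y2)) < (g1*g2*g3) * ((al + be) * (y1 + y2) - al*be - y1*y2) := by linarith [h2]
  have hD : 0 < ((al + be) * (y1 + y2) - al*be - y1*y2) := by
    by_contra hD'
    push_neg at hD'
    have h1 : (g1*g2*g3) * ((al + be) * (y1 + y2) - al*be - y1*y2) ≤ 0 := mul_nonpos_of_nonneg_of_nonpos hG3.le hD'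
    have h2' : 0 < (g1*g2 + g1*g3 + g2*g3) * (al*be*(y1 + y2) - (al + be)*(y1*y2)) := mul_pos hG2 hb1
    have h3' : 0 < (g1 + g2 + g3) * (al*be*(y1*y2)) := mul_pos hG1 hb0
    linarith
  have hN1 : 3 * (g1*g2 + g1*g3 + g2*g3) ≤ (g1 + g2 + g3) ^ 2 := by
    nlinarith [sq_nonneg (g1 - g2), sq_nonneg (g1 - g3), sq_nonneg (g2 - g3)]
  have hN2 : 3 * ((g1 + g2 + g3) * (g1*g2*g3)) ≤ (g1*g2 + g1*g3 + g2*g3) ^ 2 := by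
    nlinarith [sq_nonneg (g1*g2 - g1*g3), sq_nonneg (g1*g2 - g2*g3), sq_nonneg (g1*g3 - g2*g3)]
  have hxa : al * (g1 + g2 + g3) ≤ (g1*g2 + g1*g3 + g2*g3) := by
    nlinarith [mul_pos hg1 (show 0 < g2 - al by linarith),
      mul_pos hg3 (show 0 < g1 - al by linarith),
      mul_pos hg2 (show 0 < g3 - al by linarith)]
  have hA : (g1*g2 + g1*g3 + g2*g3) < ((al + be) - (y1 + y2)) * (g1 + g2 + g3) + ((al + be) * (y1 + y2) - al*be - y1*y2) := by linarith [h5]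
  have hmul1 : 3 * (g1*g2 + g1*g3 + g2*g3) ^ 3 * (g1*g2 + g1*g3 + g2*g3) < 3 * (g1*g2 + g1*g3 + g2*g3) ^ 3 * (((al + be) - (y1 + y2)) * (g1 + g2 + g3) + ((al + be) * (y1 + y2) - al*be - y1*y2)) := by
    have h3 : (0:ℝ) < 3 * (g1*g2 + g1*g3 + g2*g3) ^ 3 := by positivity
    exact mul_lt_mul_of_pos_left hA h3
  have haux1 : 0 ≤ ((g1 + g2 + g3) ^ 2 - 3 * (g1*g2 + g1*g3 + g2*g3)) * ((al + be) * (y1 + y2) - al*be - y1*y2) * (g1*g2 + g1*g3 + g2*g3) ^ 2 := by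
    apply mul_nonneg
    apply mul_nonneg
    · linarith
    · exact hD.le
    · positivity
  have U : 3 * (g1*g2 + g1*g3 + g2*g3) ^ 3 * ((g1*g2 + g1*g3 + g2*g3) - ((al + be) - (y1 + y2)) * (g1 + g2 + g3)) < ((al + be) * (y1 + y2) - al*be - y1*y2) * (g1 + g2 + g3) ^ 2 * (g1*g2 + g1*g3 + g2*g3) ^ 2 := by
    linarith [hmul1, haux1]
  have hmul2 : 3 * (g1 + g2 + g3) ^ 3 * ((g1*g2 + g1*g3 + g2*g3) * (al*be*(y1 + y2) - (al + be)*(y1*y2)) + (g1 + g2 + g3) * (al*be*(y1*y2))) < 3 * (g1 + g2 + g3) ^ 3 * ((g1*g2*g3) * ((al + be) * (y1 + y2) - al*be - y1*y2)) := by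
    have h3 : (0:ℝ) < 3 * (g1 + g2 + g3) ^ 3 := by positivity
    exact mul_lt_mul_of_pos_left hB h3
  have haux2 : 0 ≤ ((g1*g2 + g1*g3 + g2*g3) ^ 2 - 3 * ((g1 + g2 + g3) * (g1*g2*g3))) * ((al + be) * (y1 + y2) - al*be - y1*y2) * (g1 + g2 + g3) ^ 2 := by
    apply mul_nonneg
    apply mul_nonneg
    · linarith
    · exact hD.le
    · positivity
  have V : 3 * (g1 + g2 + g3) ^ 3 * ((g1*g2 + g1*g3 + g2*g3) * (al*be*(y1 + y2) - (al + be)*(y1*y2)) + (g1 + g2 + g3) * (al*be*(y1*y2))) < ((al + be) * (y1 + y2) - al*be - y1*y2) * (g1 + g2 + g3) ^ 2 * (g1*g2 + g1*g3 + g2*g3) ^ 2 := by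
    linarith [hmul2, haux2]
  have hf1 : 0 ≤ (g1*g2 + g1*g3 + g2*g3) - al * (g1 + g2 + g3) := by linarith
  have hab : 0 < (al - be) * (g1 + g2 + g3) := mul_pos (show (0:ℝ) < al - be by linarith) hG1
  have hf2 : 0 ≤ (g1*g2 + g1*g3 + g2*g3) - be * (g1 + g2 + g3) := by linarith [hf1, hab]
  have hf3 : 0 < (g1*g2 + g1*g3 + g2*g3) + y1 * (g1 + g2 + g3) := by positivity
  have hf4 : 0 < (g1*g2 + g1*g3 + g2*g3) + y2 * (g1 + g2 + g3) := by positivity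
  have hprod : 0 ≤ ((g1*g2 + g1*g3 + g2*g3) - al * (g1 + g2 + g3)) * ((g1*g2 + g1*g3 + g2*g3) - be * (g1 + g2 + g3)) * (((g1*g2 + g1*g3 + g2*g3) + y1 * (g1 + g2 + g3)) * ((g1*g2 + g1*g3 + g2*g3) + y2 * (g1 + g2 + g3))) :=
    mul_nonneg (mul_nonneg hf1 hf2) (mul_nonneg hf3.le hf4.le)
  have hpos : 0 < ((al + be) * (y1 + y2) - al*be - y1*y2) * (g1 + g2 + g3) ^ 2 * (g1*g2 + g1*g3 + g2*g3) ^ 2 := by positivity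
  linarith [U, V, hprod, hpos]

/-- Proposition 6: the couple `(Σ_{2,4,2}, (2,0,3))` is not realizable: there is
no hyperbolic polynomial of degree `7` with positive roots `β < α` and negative
roots of moduli `y₁ < y₂ < γ₁ < γ₂ < γ₃`, with `y₁ < y₂ < β < α < γ₁`, whose
sign pattern is `Σ_{2,4,2}`. -/
theorem stmt10 :
    ¬ ∃ (P : Polynomial ℝ) (α β y₁ y₂ γ₁ γ₂ γ₃ : ℝ),
      P.natDegree = 7 ∧
      SignPatternMNQ P 7 2 4 2 ∧
      0 < y₁ ∧ y₁ < y₂ ∧ y₂ < β ∧ β < α ∧ α < γ₁ ∧ γ₁ < γ₂ ∧ γ₂ < γ₃ ∧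
      P.roots = {α, β, -y₁, -y₂, -γ₁, -γ₂, -γ₃} := by
  rintro ⟨P, al, be, y1, y2, g1, g2, g3, hdeg, ⟨-, -, -, -, hpos, hneg⟩,
    hy1, h12, h2b, hba, hag, hg12, hg23, hroots⟩
  have h7 : 0 < P.coeff 7 := hpos 7 le_rfl (Or.inl (by norm_num))
  have h5 : P.coeff 5 < 0 := hneg 5 (by norm_num) (by norm_num)
  have h2 : P.coeff 2 < 0 := hneg 2 (by norm_num) (by norm_num)
  have hcard : Multiset.card P.roots = P.natDegree := by
    rw [hroots, hdeg]; rfl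
  have hfact := Polynomial.C_leadingCoeff_mul_prod_multiset_X_sub_C hcard
  have hL : 0 < P.leadingCoeff := by
    rwa [Polynomial.leadingCoeff, hdeg]
  have hexp : (P.roots.map fun a => Polynomial.X - Polynomial.C a).prod =
      Polynomial.C (1) * Polynomial.X ^ 7 + Polynomial.C (-al - be + y1 + y2 + g1 + g2 + g3) * Polynomial.X ^ 6 + Polynomial.C (al*be - al*y1 - al*y2 - al*g1 - al*g2 - al*g3 - be*y1 - be*y2 - be*g1 - be*g2 - be*g3 + y1*y2 + y1*g1 + y1*g2 + y1*g3 + y2*g1 + y2*g2 + y2*g3 + g1*g2 + g1*g3 + g2*g3) * Polynomial.X ^ 5 + Polynomial.C (al*be*y1 + al*be*y2 + al*be*g1 + al*be*g2 + al*be*g3 - al*y1*y2 - al*y1*g1 - al*y1*g2 - al*y1*g3 - al*y2*g1 - al*y2*g2 - al*y2*g3 - al*g1*g2 - al*g1*g3 - al*g2*g3 - be*y1*y2 - be*y1*g1 - be*y1*g2 - be*y1*g3 - be*y2*g1 - be*y2*g2 - be*y2*g3 - be*g1*g2 - be*g1*g3 - be*g2*g3 + y1*y2*g1 + y1*y2*g2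 + y1*y2*g3 + y1*g1*g2 + y1*g1*g3 + y1*g2*g3 + y2*g1*g2 + y2*g1*g3 + y2*g2*g3 + g1*g2*g3) * Polynomial.X ^ 4 + Polynomial.C (al*be*y1*y2 + al*be*y1*g1 + al*be*y1*g2 + al*be*y1*g3 + al*be*y2*g1 + al*be*y2*g2 + al*be*y2*g3 + al*be*g1*g2 + al*be*g1*g3 + al*be*g2*g3 - al*y1*y2*g1 - al*y1*y2*g2 - al*y1*y2*g3 - al*y1*g1*g2 - al*y1*g1*g3 - al*y1*g2*g3 - al*y2*g1*g2 - al*y2*g1*g3 - al*y2*g2*g3 - al*g1*g2*g3 - be*y1*y2*g1 - be*y1*y2*g2 - be*y1*y2*g3 - be*y1*g1*g2 - be*y1*g1*g3 - be*y1*g2*g3 - be*y2*g1*g2 - be*y2*g1*g3 - be*y2*g2*g3 - be*g1*g2*g3 + y1*y2*g1*g2 + y1*y2*g1*g3 + y1*y2*g2*g3 + y1*g1*g2*g3 + y2*g1*g2*g3) * Polynomial.X ^ 3 + Polynomial.C (al*be*y1*y2*g1 + al*be*y1*y2*g2 + al*be*y1*y2*g3 + al*be*y1*g1*g2 + al*be*y1*g1*g3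 + al*be*y1*g2*g3 + al*be*y2*g1*g2 + al*be*y2*g1*g3 + al*be*y2*g2*g3 + al*be*g1*g2*g3 - al*y1*y2*g1*g2 - al*y1*y2*g1*g3 - al*y1*y2*g2*g3 - al*y1*g1*g2*g3 - al*y2*g1*g2*g3 - be*y1*y2*g1*g2 - be*y1*y2*g1*g3 - be*y1*y2*g2*g3 - be*y1*g1*g2*g3 - be*y2*g1*g2*g3 + y1*y2*g1*g2*g3) * Polynomial.X ^ 2 + Polynomial.C (al*be*y1*y2*g1*g2 + al*be*y1*y2*g1*g3 + al*be*y1*y2*g2*g3 + al*be*y1*g1*g2*g3 + al*be*y2*g1*g2*g3 - al*y1*y2*g1*g2*g3 - be*y1*y2*g1*g2*g3) * Polynomial.X ^ 1 + Polynomial.C (al*be*y1*y2*g1*g2*g3) := by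
    rw [hroots]
    simp only [Multiset.insert_eq_cons, Multiset.map_cons, Multiset.map_singleton,
      Multiset.prod_cons, Multiset.prod_singleton, map_add, map_sub, map_mul, map_neg, C_add,
      C_sub, C_mul, C_neg, C_1]
    ring
  have hc5 : P.coeff 5 = P.leadingCoeff * (al*be - al*y1 - al*y2 - al*g1 - al*g2 - al*g3 - be*y1 - be*y2 - be*g1 - be*g2 - be*g3 + y1*y2 + y1*g1 + y1*g2 + y1*g3 + y2*g1 + y2*g2 + y2*g3 + g1*g2 + g1*g3 + g2*g3) := by
    conv_lhs => rw [← hfact, hexp]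
    simp only [coeff_add, coeff_C_mul, coeff_X_pow, coeff_C]
    norm_num
  have hc2 : P.coeff 2 = P.leadingCoeff * (al*be*y1*y2*g1 + al*be*y1*y2*g2 + al*be*y1*y2*g3 + al*be*y1*g1*g2 + al*be*y1*g1*g3 + al*be*y1*g2*g3 + al*be*y2*g1*g2 + al*be*y2*g1*g3 + al*be*y2*g2*g3 + al*be*g1*g2*g3 - al*y1*y2*g1*g2 - al*y1*y2*g1*g3 - al*y1*y2*g2*g3 - al*y1*g1*g2*g3 - al*y2*g1*g2*g3 - be*y1*y2*g1*g2 - be*y1*y2*g1*g3 - be*y1*y2*g2*g3 - be*y1*g1*g2*g3 - be*y2*g1*g2*g3 + y1*y2*g1*g2*g3) := by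
    conv_lhs => rw [← hfact, hexp]
    simp only [coeff_add, coeff_C_mul, coeff_X_pow, coeff_C]
    norm_num
  have hE5 : al*be - al*y1 - al*y2 - al*g1 - al*g2 - al*g3 - be*y1 - be*y2 - be*g1 - be*g2 - be*g3 + y1*y2 + y1*g1 + y1*g2 + y1*g3 + y2*g1 + y2*g2 + y2*g3 + g1*g2 + g1*g3 + g2*g3 < 0 := by
    by_contra h
    push_neg at h
    have := mul_nonneg hL.le h
    rw [← hc5] at this
    linarith
  have hE2 : al*be*y1*y2*g1 + al*be*y1*y2*g2 + al*be*y1*y2*g3 + al*be*y1*g1*g2 + al*be*y1*g1*g3 + al*be*y1*g2*g3 + al*be*y2*g1*g2 + al*be*y2*g1*g3 + al*be*y2*g2*g3 + al*be*g1*g2*g3 - al*y1*y2*g1*g2 - al*y1*y2*g1*g3 - al*y1*y2*g2*g3 - al*y1*g1*g2*g3 - al*y2*g1*g2*g3 - be*y1*y2*g1*g2 - be*y1*y2*g1*g3 - be*y1*y2*g2*g3 - be*y1*g1*g2*g3 - be*y2*g1*g2*g3 + y1*y2*g1*g2*g3 < 0 := by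
    by_contra h
    push_neg at h
    have := mul_nonneg hL.le h
    rw [← hc2] at this
    linarith
  exact key_ineq al be y1 y2 g1 g2 g3 hy1 h12 h2b hba hag hg12 hg23 hE5 hE2
end

section
/- The couple (Σ_{2,4,2},(1,1,3)) is not realizable: there is no hyperbolic polynomial of degree 7 with positive roots β<α and negative roots with moduli γ_1<⋯<γ_5 satisfying γ_1<β<γ_2<α<γ_3, whose sign pattern is Σ_{2,4,2}. -/
open Polynomial Finset

set_option maxHeartbeats 1000000 in
set_option maxRecDepth 4000 in
private lemma cert_nonneg (p w t r X Y Z : ℝ) (hp : 0 < p) (hw : 0 < w)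
    (ht : 0 < t) (hr : 0 < r) (hX : 0 < X) (hY : 0 < Y) (hZ : 0 ≤ Z)
    (h9 : 9 * Z ≤ X * Y) :
    0 ≤ 2*p^5 + 9*p^4*w + 8*p^4*t + 7*p^4*r + 2*p^4*X + 16*p^3*w^2 + 29*p^3*w*t + 24*p^3*w*r + 7*p^3*w*X + 13*p^3*t^2 + 22*p^3*t*r + 10*p^3*t*X + 9*p^3*r^2 + 9*p^3*r*X + 2*p^3*X^2 + 14*p^2*w^3 + 39*p^2*w^2*t + 30*p^2*w^2*r + 9*p^2*w^2*X + 36*p^2*w*t^2 + 57*p^2*w*t*r + 26*p^2*w*t*X + 21*p^2*w*r^2 + 22*p^2*w*r*X + 5*p^2*w*X^2 + 11*p^2*t^3 + 27*p^2*t^2*r + 17*p^2*t^2*X + 21*p^2*t*r^2 + 29*p^2*t*r*X + 6*p^2*t*X^2 + 4*p^2*t*Y + 5*p^2*r^3 + 12*p^2*r^2*X + 5*p^2*r*X^2 + 4*p^2*r*Y + 3*p^2*X*Y - p^2*Z + 6*p*w^4 + 23*p*w^3*t + 16*p*w^3*r + 5*p*w^3*X + 33*p*w^2*t^2 + 48*p*w^2*t*r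 + 22*p*w^2*t*X + 15*p*w^2*r^2 + 17*p*w^2*r*X + 4*p*w^2*X^2 + 21*p*w*t^3 + 48*p*w*t^2*r + 29*p*w*t^2*X + 33*p*w*t*r^2 + 47*p*w*t*r*X + 10*p*w*t*X^2 + 6*p*w*t*Y + 6*p*w*r^3 + 18*p*w*r^2*X + 8*p*w*r*X^2 + 6*p*w*r*Y + 5*p*w*X*Y - 3*p*w*Z + 5*p*t^4 + 16*p*t^3*r + 12*p*t^3*X + 18*p*t^2*r^2 + 30*p*t^2*r*X + 6*p*t^2*X^2 + 6*p*t^2*Y + 8*p*t*r^3 + 24*p*t*r^2*X + 10*p*t*r*X^2 + 10*p*t*r*Y + 6*p*t*X*Y + 2*p*t*Z + p*r^4 + 6*p*r^3*X + 4*p*r^2*X^2 + 4*p*r^2*Y + 5*p*r*X*Y + p*r*Z + 2*p*X*Z + p*Y^2 + w^5 + 5*w^4*t + 3*w^4*r + w^4*X + 10*w^3*t^2 + 13*w^3*t*r + 6*w^3*t*X + 3*w^3*r^2 + 4*w^3*r*X + w^3*X^2 + 10*w^2*t^3 + 21*w^2*t^2*r + 12*w^2*t^2*X + 12*w^2*t*r^2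 + 18*w^2*t*r*X + 4*w^2*t*X^2 + 2*w^2*t*Y + w^2*r^3 + 6*w^2*r^2*X + 3*w^2*r*X^2 + 2*w^2*r*Y + 2*w^2*X*Y - 2*w^2*Z + 5*w*t^4 + 15*w*t^3*r + 10*w*t^3*X + 15*w*t^2*r^2 + 24*w*t^2*r*X + 5*w*t^2*X^2 + 4*w*t^2*Y + 5*w*t*r^3 + 18*w*t*r^2*X + 8*w*t*r*X^2 + 7*w*t*r*Y + 5*w*t*X*Y - w*t*Z + 4*w*r^3*X + 3*w*r^2*X^2 + 3*w*r^2*Y + 4*w*r*X*Y + w*X*Z + w*Y^2 + t^5 + 4*t^4*r + 3*t^4*X + 6*t^3*r^2 + 10*t^3*r*X + 2*t^3*X^2 + 2*t^3*Y + 4*t^2*r^3 + 12*t^2*r^2*X + 5*t^2*r*X^2 + 5*t^2*r*Y + 3*t^2*X*Y + t^2*Z + t*r^4 + 6*t*r^3*X + 4*t*r^2*X^2 + 4*t*r^2*Y + 5*t*r*X*Y + t*r*Z + 2*t*X*Z + t*Y^2 + r^4*X + r^3*X^2 + r^3*Y + 2*r^2*X*Y + r*X*Z + r*Y^2 + Y*Z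 := by
  have hD : (0:ℝ) ≤ p^2 + 3*p*w + 2*w^2 + w*t := by positivity
  have hfix : (0:ℝ) ≤ 18*p^5 + 81*p^4*w + 72*p^4*t + 63*p^4*r + 18*p^4*X + 144*p^3*w^2 + 261*p^3*w*t + 216*p^3*w*r + 63*p^3*w*X + 117*p^3*t^2 + 198*p^3*t*r + 90*p^3*t*X + 81*p^3*r^2 + 81*p^3*r*X + 18*p^3*X^2 + 126*p^2*w^3 + 351*p^2*w^2*t + 270*p^2*w^2*r + 81*p^2*w^2*X + 324*p^2*w*t^2 + 513*p^2*w*t*r + 234*p^2*w*t*X + 189*p^2*w*r^2 + 198*p^2*w*r*X + 45*p^2*w*X^2 + 99*p^2*t^3 + 243*p^2*t^2*r + 153*p^2*t^2*X + 189*p^2*t*r^2 + 261*p^2*t*r*X + 54*p^2*t*X^2 + 36*p^2*t*Y + 45*p^2*r^3 + 108*p^2*r^2*X + 45*p^2*r*X^2 + 36*p^2*r*Y + 26*p^2*X*Y + 54*p*w^4 + 207*p*w^3*t + 144*p*w^3*r + 45*p*w^3*X + 297*p*w^2*t^2 + 432*p*w^2*t*r + 198*p*w^2*t*X + 135*p*w^2*r^2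 + 153*p*w^2*r*X + 36*p*w^2*X^2 + 189*p*w*t^3 + 432*p*w*t^2*r + 261*p*w*t^2*X + 297*p*w*t*r^2 + 423*p*w*t*r*X + 90*p*w*t*X^2 + 54*p*w*t*Y + 54*p*w*r^3 + 162*p*w*r^2*X + 72*p*w*r*X^2 + 54*p*w*r*Y + 42*p*w*X*Y + 45*p*t^4 + 144*p*t^3*r + 108*p*t^3*X + 162*p*t^2*r^2 + 270*p*t^2*r*X + 54*p*t^2*X^2 + 54*p*t^2*Y + 72*p*t*r^3 + 216*p*t*r^2*X + 90*p*t*r*X^2 + 90*p*t*r*Y + 54*p*t*X*Y + 18*p*t*Z + 9*p*r^4 + 54*p*r^3*X + 36*p*r^2*X^2 + 36*p*r^2*Y + 45*p*r*X*Y + 9*p*r*Z + 18*p*X*Z + 9*p*Y^2 + 9*w^5 + 45*w^4*t + 27*w^4*r + 9*w^4*X + 90*w^3*t^2 + 117*w^3*t*r + 54*w^3*t*X + 27*w^3*r^2 + 36*w^3*r*X + 9*w^3*X^2 + 90*w^2*t^3 + 189*w^2*t^2*r + 108*w^2*t^2*X + 108*w^2*t*r^2 + 162*w^2*t*r*X +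 36*w^2*t*X^2 + 18*w^2*t*Y + 9*w^2*r^3 + 54*w^2*r^2*X + 27*w^2*r*X^2 + 18*w^2*r*Y + 16*w^2*X*Y + 45*w*t^4 + 135*w*t^3*r + 90*w*t^3*X + 135*w*t^2*r^2 + 216*w*t^2*r*X + 45*w*t^2*X^2 + 36*w*t^2*Y + 45*w*t*r^3 + 162*w*t*r^2*X + 72*w*t*r*X^2 + 63*w*t*r*Y + 44*w*t*X*Y + 36*w*r^3*X + 27*w*r^2*X^2 + 27*w*r^2*Y + 36*w*r*X*Y + 9*w*X*Z + 9*w*Y^2 + 9*t^5 + 36*t^4*r + 27*t^4*X + 54*t^3*r^2 + 90*t^3*r*X + 18*t^3*X^2 + 18*t^3*Y + 36*t^2*r^3 + 108*t^2*r^2*X + 45*t^2*r*X^2 + 45*t^2*r*Y + 27*t^2*X*Y + 9*t^2*Z + 9*t*r^4 + 54*t*r^3*X + 36*t*r^2*X^2 + 36*t*r^2*Y + 45*t*r*X*Y + 9*t*r*Z + 18*t*X*Z + 9*t*Y^2 + 9*r^4*X + 9*r^3*X^2 + 9*r^3*Y + 18*r^2*X*Y + 9*r*X*Z + 9*r*Y^2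 + 9*Y*Z := by positivity
  linarith [hfix, mul_nonneg hD (sub_nonneg.2 h9)]

private lemma amgm3 (x y z : ℝ) (hx : 0 < x) (hy : 0 < y) (hz : 0 < z) :
    9 * (x*y*z) ≤ (x + y + z) * (x*y + x*z + y*z) := by
  nlinarith [mul_nonneg hx.le (sq_nonneg (y - z)), mul_nonneg hy.le (sq_nonneg (x - z)),
    mul_nonneg hz.le (sq_nonneg (x - y))]

set_option maxHeartbeats 0 in
set_option maxRecDepth 8000 in
/-- Proposition 7: the couple `(Σ_{2,4,2}, (1,1,3))` is not realizable: there is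
no hyperbolic polynomial of degree `7` with positive roots `β < α` and negative
roots of moduli `γ₁ < γ₂ < γ₃ < γ₄ < γ₅` satisfying `γ₁ < β < γ₂ < α < γ₃`,
whose sign pattern is `Σ_{2,4,2}`. -/
theorem stmt11 :
    ¬ ∃ (P : Polynomial ℝ) (α β γ₁ γ₂ γ₃ γ₄ γ₅ : ℝ),
      P.natDegree = 7 ∧
      SignPatternMNQ P 7 2 4 2 ∧
      0 < γ₁ ∧ γ₁ < β ∧ β < γ₂ ∧ γ₂ < α ∧ α < γ₃ ∧ γ₃ < γ₄ ∧ γ₄ < γ₅ ∧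
      P.roots = {α, β, -γ₁, -γ₂, -γ₃, -γ₄, -γ₅} := by
  rintro ⟨P, α, β, γ₁, γ₂, γ₃, γ₄, γ₅, hdeg, ⟨-, -, -, -, hpos, hneg⟩,
    hg1, hg1b, hbg2, hg2a, hag3, h34, h45, hroots⟩
  have ha : (0:ℝ) < P.coeff 7 := hpos 7 le_rfl (Or.inl (by norm_num))
  have hc5 : P.coeff 5 < 0 := hneg 5 (by norm_num) (by norm_num)
  have hc2 : P.coeff 2 < 0 := hneg 2 (by norm_num) (by norm_num)
  have hcard : Multiset.card P.roots = P.natDegree := by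
    rw [hroots, hdeg]; rfl
  have hlc : P.leadingCoeff = P.coeff 7 := by
    rw [Polynomial.leadingCoeff, hdeg]
  have hP := P.C_leadingCoeff_mul_prod_multiset_X_sub_C hcard
  rw [hroots, hlc] at hP
  have hprodeq : ((({α, β, -γ₁, -γ₂, -γ₃, -γ₄, -γ₅} : Multiset ℝ).map fun a => X - C a)).prod
      = (X - C α) * ((X - C β) * ((X - C (-γ₁)) * ((X - C (-γ₂)) * ((X - C (-γ₃)) *
        ((X - C (-γ₄)) * (X - C (-γ₅))))))) := by
    simp only [Multiset.insert_eq_cons, Multiset.map_cons, Multiset.map_singleton,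
      Multiset.prod_cons, Multiset.prod_singleton]
  rw [hprodeq] at hP
  have hexp : (X - C α) * ((X - C β) * ((X - C (-γ₁)) * ((X - C (-γ₂)) * ((X - C (-γ₃)) *
        ((X - C (-γ₄)) * (X - C (-γ₅))))))) =
      X^7 + C (-α - β + γ₁ + γ₂ + γ₃ + γ₄ + γ₅) * X^6 + C (α*β - α*γ₁ - α*γ₂ - α*γ₃ - α*γ₄ - α*γ₅ - β*γ₁ - β*γ₂ - β*γ₃ - β*γ₄ - β*γ₅ + γ₁*γ₂ + γ₁*γ₃ + γ₁*γ₄ + γ₁*γ₅ + γ₂*γ₃ + γ₂*γ₄ + γ₂*γ₅ + γ₃*γ₄ + γ₃*γ₅ + γ₄*γ₅) * X^5 + C (α*β*γ₁ + α*β*γ₂ + α*β*γ₃ + α*β*γ₄ + α*β*γ₅ - α*γ₁*γ₂ - α*γ₁*γ₃ - α*γ₁*γ₄ - α*γ₁*γ₅ - α*γ₂*γ₃ - α*γ₂*γ₄ - α*γ₂*γ₅ - α*γ₃*γ₄ - α*γ₃*γ₅ - α*γ₄*γ₅ - β*γ₁*γ₂ - β*γ₁*γ₃ - β*γ₁*γ₄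 - β*γ₁*γ₅ - β*γ₂*γ₃ - β*γ₂*γ₄ - β*γ₂*γ₅ - β*γ₃*γ₄ - β*γ₃*γ₅ - β*γ₄*γ₅ + γ₁*γ₂*γ₃ + γ₁*γ₂*γ₄ + γ₁*γ₂*γ₅ + γ₁*γ₃*γ₄ + γ₁*γ₃*γ₅ + γ₁*γ₄*γ₅ + γ₂*γ₃*γ₄ + γ₂*γ₃*γ₅ + γ₂*γ₄*γ₅ + γ₃*γ₄*γ₅) * X^4
        + C (α*β*γ₁*γ₂ + α*β*γ₁*γ₃ + α*β*γ₁*γ₄ + α*β*γ₁*γ₅ + α*β*γ₂*γ₃ + α*β*γ₂*γ₄ + α*β*γ₂*γ₅ + α*β*γ₃*γ₄ + α*β*γ₃*γ₅ + α*β*γ₄*γ₅ - α*γ₁*γ₂*γ₃ - α*γ₁*γ₂*γ₄ - α*γ₁*γ₂*γ₅ - α*γ₁*γ₃*γ₄ - α*γ₁*γ₃*γ₅ - α*γ₁*γ₄*γ₅ - α*γ₂*γ₃*γ₄ - α*γ₂*γ₃*γ₅ - α*γ₂*γ₄*γ₅ - α*γ₃*γ₄*γ₅ - β*γ₁*γ₂*γ₃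 - β*γ₁*γ₂*γ₄ - β*γ₁*γ₂*γ₅ - β*γ₁*γ₃*γ₄ - β*γ₁*γ₃*γ₅ - β*γ₁*γ₄*γ₅ - β*γ₂*γ₃*γ₄ - β*γ₂*γ₃*γ₅ - β*γ₂*γ₄*γ₅ - β*γ₃*γ₄*γ₅ + γ₁*γ₂*γ₃*γ₄ + γ₁*γ₂*γ₃*γ₅ + γ₁*γ₂*γ₄*γ₅ + γ₁*γ₃*γ₄*γ₅ + γ₂*γ₃*γ₄*γ₅) * X^3 + C (α*β*γ₁*γ₂*γ₃ + α*β*γ₁*γ₂*γ₄ + α*β*γ₁*γ₂*γ₅ + α*β*γ₁*γ₃*γ₄ + α*β*γ₁*γ₃*γ₅ + α*β*γ₁*γ₄*γ₅ + α*β*γ₂*γ₃*γ₄ + α*β*γ₂*γ₃*γ₅ + α*β*γ₂*γ₄*γ₅ + α*β*γ₃*γ₄*γ₅ - α*γ₁*γ₂*γ₃*γ₄ - α*γ₁*γ₂*γ₃*γ₅ - α*γ₁*γ₂*γ₄*γ₅ - α*γ₁*γ₃*γ₄*γ₅ - α*γ₂*γ₃*γ₄*γ₅ - β*γ₁*γ₂*γ₃*γ₄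 - β*γ₁*γ₂*γ₃*γ₅ - β*γ₁*γ₂*γ₄*γ₅ - β*γ₁*γ₃*γ₄*γ₅ - β*γ₂*γ₃*γ₄*γ₅ + γ₁*γ₂*γ₃*γ₄*γ₅) * X^2 + C (α*β*γ₁*γ₂*γ₃*γ₄ + α*β*γ₁*γ₂*γ₃*γ₅ + α*β*γ₁*γ₂*γ₄*γ₅ + α*β*γ₁*γ₃*γ₄*γ₅ + α*β*γ₂*γ₃*γ₄*γ₅ - α*γ₁*γ₂*γ₃*γ₄*γ₅ - β*γ₁*γ₂*γ₃*γ₄*γ₅) * X + C (α*β*γ₁*γ₂*γ₃*γ₄*γ₅) := by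
    simp only [map_add, map_sub, map_mul, map_neg, map_pow, map_ofNat]
    ring
  rw [hexp] at hP
  have h5 : P.coeff 5 = P.coeff 7 * (α*β - α*γ₁ - α*γ₂ - α*γ₃ - α*γ₄ - α*γ₅ - β*γ₁ - β*γ₂ - β*γ₃ - β*γ₄ - β*γ₅ + γ₁*γ₂ + γ₁*γ₃ + γ₁*γ₄ + γ₁*γ₅ + γ₂*γ₃ + γ₂*γ₄ + γ₂*γ₅ + γ₃*γ₄ + γ₃*γ₅ + γ₄*γ₅) := by
    conv_lhs => rw [← hP]
    simp only [coeff_C_mul, coeff_add, coeff_X_pow, coeff_X, coeff_C]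
    norm_num
  have h2 : P.coeff 2 = P.coeff 7 * (α*β*γ₁*γ₂*γ₃ + α*β*γ₁*γ₂*γ₄ + α*β*γ₁*γ₂*γ₅ + α*β*γ₁*γ₃*γ₄ + α*β*γ₁*γ₃*γ₅ + α*β*γ₁*γ₄*γ₅ + α*β*γ₂*γ₃*γ₄ + α*β*γ₂*γ₃*γ₅ + α*β*γ₂*γ₄*γ₅ + α*β*γ₃*γ₄*γ₅ - α*γ₁*γ₂*γ₃*γ₄ - α*γ₁*γ₂*γ₃*γ₅ - α*γ₁*γ₂*γ₄*γ₅ - α*γ₁*γ₃*γ₄*γ₅ - α*γ₂*γ₃*γ₄*γ₅ - β*γ₁*γ₂*γ₃*γ₄ - β*γ₁*γ₂*γ₃*γ₅ - β*γ₁*γ₂*γ₄*γ₅ - β*γ₁*γ₃*γ₄*γ₅ - β*γ₂*γ₃*γ₄*γ₅ + γ₁*γ₂*γ₃*γ₄*γ₅) := by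
    conv_lhs => rw [← hP]
    simp only [coeff_C_mul, coeff_add, coeff_X_pow, coeff_X, coeff_C]
    norm_num
  have hS2 : (α*β - α*γ₁ - α*γ₂ - α*γ₃ - α*γ₄ - α*γ₅ - β*γ₁ - β*γ₂ - β*γ₃ - β*γ₄ - β*γ₅ + γ₁*γ₂ + γ₁*γ₃ + γ₁*γ₄ + γ₁*γ₅ + γ₂*γ₃ + γ₂*γ₄ + γ₂*γ₅ + γ₃*γ₄ + γ₃*γ₅ + γ₄*γ₅) < 0 := by
    by_contra h
    push_neg at h
    nlinarith [mul_nonneg ha.le h]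
  have hS5 : (α*β*γ₁*γ₂*γ₃ + α*β*γ₁*γ₂*γ₄ + α*β*γ₁*γ₂*γ₅ + α*β*γ₁*γ₃*γ₄ + α*β*γ₁*γ₃*γ₅ + α*β*γ₁*γ₄*γ₅ + α*β*γ₂*γ₃*γ₄ + α*β*γ₂*γ₃*γ₅ + α*β*γ₂*γ₄*γ₅ + α*β*γ₃*γ₄*γ₅ - α*γ₁*γ₂*γ₃*γ₄ - α*γ₁*γ₂*γ₃*γ₅ - α*γ₁*γ₂*γ₄*γ₅ - α*γ₁*γ₃*γ₄*γ₅ - α*γ₂*γ₃*γ₄*γ₅ - β*γ₁*γ₂*γ₃*γ₄ - β*γ₁*γ₂*γ₃*γ₅ - β*γ₁*γ₂*γ₄*γ₅ - β*γ₁*γ₃*γ₄*γ₅ - β*γ₂*γ₃*γ₄*γ₅ + γ₁*γ₂*γ₃*γ₄*γ₅) < 0 := by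
    by_contra h
    push_neg at h
    nlinarith [mul_nonneg ha.le h]
  have hx1 : (0:ℝ) < γ₃ - α := by linarith
  have hx2 : (0:ℝ) < γ₄ - α := by linarith
  have hx3 : (0:ℝ) < γ₅ - α := by linarith
  have hkey := cert_nonneg γ₁ (β - γ₁) (γ₂ - β) (α - γ₂)
    ((γ₃ - α) + (γ₄ - α) + (γ₅ - α))
    ((γ₃ - α)*(γ₄ - α) + (γ₃ - α)*(γ₅ - α) + (γ₄ - α)*(γ₅ - α))
    ((γ₃ - α)*(γ₄ - α)*(γ₅ - α))
    hg1 (by linarith) (by linarith) (by linarith) (by linarith)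
    (by linarith [mul_pos hx1 hx2, mul_pos hx1 hx3, mul_pos hx2 hx3])
    (mul_pos (mul_pos hx1 hx2) hx3).le
    (by
      have := amgm3 (γ₃ - α) (γ₄ - α) (γ₅ - α) hx1 hx2 hx3
      linarith)
  have hid : γ₃*γ₄*γ₅*(α*β - α*γ₁ - α*γ₂ - α*γ₃ - α*γ₄ - α*γ₅ - β*γ₁ - β*γ₂ - β*γ₃ - β*γ₄ - β*γ₅ + γ₁*γ₂ + γ₁*γ₃ + γ₁*γ₄ + γ₁*γ₅ + γ₂*γ₃ + γ₂*γ₄ + γ₂*γ₅ + γ₃*γ₄ + γ₃*γ₅ + γ₄*γ₅) + (α*β*γ₁*γ₂*γ₃ + α*β*γ₁*γ₂*γ₄ + α*β*γ₁*γ₂*γ₅ + α*β*γ₁*γ₃*γ₄ + α*β*γ₁*γ₃*γ₅ + α*β*γ₁*γ₄*γ₅ + α*β*γ₂*γ₃*γ₄ + α*β*γ₂*γ₃*γ₅ + α*β*γ₂*γ₄*γ₅ + α*β*γ₃*γ₄*γ₅ - α*γ₁*γ₂*γ₃*γ₄ - α*γ₁*γ₂*γ₃*γ₅ - α*γ₁*γ₂*γ₄*γ₅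 - α*γ₁*γ₃*γ₄*γ₅ - α*γ₂*γ₃*γ₄*γ₅ - β*γ₁*γ₂*γ₃*γ₄ - β*γ₁*γ₂*γ₃*γ₅ - β*γ₁*γ₂*γ₄*γ₅ - β*γ₁*γ₃*γ₄*γ₅ - β*γ₂*γ₃*γ₄*γ₅ + γ₁*γ₂*γ₃*γ₄*γ₅) = 2*γ₁^5 + 9*γ₁^4*(β - γ₁) + 8*γ₁^4*(γ₂ - β) + 7*γ₁^4*(α - γ₂) + 2*γ₁^4*((γ₃ - α) + (γ₄ - α) + (γ₅ - α)) + 16*γ₁^3*(β - γ₁)^2 + 29*γ₁^3*(β - γ₁)*(γ₂ - β) + 24*γ₁^3*(β - γ₁)*(α - γ₂) + 7*γ₁^3*(β - γ₁)*((γ₃ - α) + (γ₄ - α) + (γ₅ - α)) + 13*γ₁^3*(γ₂ - β)^2 + 22*γ₁^3*(γ₂ - β)*(α - γ₂) + 10*γ₁^3*(γ₂ - β)*((γ₃ - α) + (γ₄ - α) + (γ₅ - α)) + 9*γ₁^3*(α - γ₂)^2 + 9*γ₁^3*(α - γ₂)*((γ₃ - α) + (γ₄ - α) + (γ₅ - α))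 + 2*γ₁^3*((γ₃ - α) + (γ₄ - α) + (γ₅ - α))^2 + 14*γ₁^2*(β - γ₁)^3 + 39*γ₁^2*(β - γ₁)^2*(γ₂ - β) + 30*γ₁^2*(β - γ₁)^2*(α - γ₂) + 9*γ₁^2*(β - γ₁)^2*((γ₃ - α) + (γ₄ - α) + (γ₅ - α)) + 36*γ₁^2*(β - γ₁)*(γ₂ - β)^2 + 57*γ₁^2*(β - γ₁)*(γ₂ - β)*(α - γ₂) + 26*γ₁^2*(β - γ₁)*(γ₂ - β)*((γ₃ - α) + (γ₄ - α) + (γ₅ - α)) + 21*γ₁^2*(β - γ₁)*(α - γ₂)^2 + 22*γ₁^2*(β - γ₁)*(α - γ₂)*((γ₃ - α) + (γ₄ - α) + (γ₅ - α)) + 5*γ₁^2*(β - γ₁)*((γ₃ - α) + (γ₄ - α) + (γ₅ - α))^2 + 11*γ₁^2*(γ₂ - β)^3 + 27*γ₁^2*(γ₂ - β)^2*(α - γ₂) + 17*γ₁^2*(γ₂ - β)^2*((γ₃ - α) + (γ₄ - α) + (γ₅ - α)) + 21*γ₁^2*(γ₂ - β)*(α - γ₂)^2 + 29*γ₁^2*(γ₂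 - β)*(α - γ₂)*((γ₃ - α) + (γ₄ - α) + (γ₅ - α)) + 6*γ₁^2*(γ₂ - β)*((γ₃ - α) + (γ₄ - α) + (γ₅ - α))^2 + 4*γ₁^2*(γ₂ - β)*((γ₃ - α)*(γ₄ - α) + (γ₃ - α)*(γ₅ - α) + (γ₄ - α)*(γ₅ - α)) + 5*γ₁^2*(α - γ₂)^3 + 12*γ₁^2*(α - γ₂)^2*((γ₃ - α) + (γ₄ - α) + (γ₅ - α)) + 5*γ₁^2*(α - γ₂)*((γ₃ - α) + (γ₄ - α) + (γ₅ - α))^2 + 4*γ₁^2*(α - γ₂)*((γ₃ - α)*(γ₄ - α) + (γ₃ - α)*(γ₅ - α) + (γ₄ - α)*(γ₅ - α)) + 3*γ₁^2*((γ₃ - α) + (γ₄ - α) + (γ₅ - α))*((γ₃ - α)*(γ₄ - α) + (γ₃ - α)*(γ₅ - α) + (γ₄ - α)*(γ₅ - α)) - γ₁^2*((γ₃ - α)*(γ₄ - α)*(γ₅ - α)) + 6*γ₁*(β - γ₁)^4 + 23*γ₁*(β - γ₁)^3*(γ₂ - β) + 16*γ₁*(β - γ₁)^3*(α - γ₂)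 + 5*γ₁*(β - γ₁)^3*((γ₃ - α) + (γ₄ - α) + (γ₅ - α)) + 33*γ₁*(β - γ₁)^2*(γ₂ - β)^2 + 48*γ₁*(β - γ₁)^2*(γ₂ - β)*(α - γ₂) + 22*γ₁*(β - γ₁)^2*(γ₂ - β)*((γ₃ - α) + (γ₄ - α) + (γ₅ - α)) + 15*γ₁*(β - γ₁)^2*(α - γ₂)^2 + 17*γ₁*(β - γ₁)^2*(α - γ₂)*((γ₃ - α) + (γ₄ - α) + (γ₅ - α)) + 4*γ₁*(β - γ₁)^2*((γ₃ - α) + (γ₄ - α) + (γ₅ - α))^2 + 21*γ₁*(β - γ₁)*(γ₂ - β)^3 + 48*γ₁*(β - γ₁)*(γ₂ - β)^2*(α - γ₂) + 29*γ₁*(β - γ₁)*(γ₂ - β)^2*((γ₃ - α) + (γ₄ - α) + (γ₅ - α)) + 33*γ₁*(β - γ₁)*(γ₂ - β)*(α - γ₂)^2 + 47*γ₁*(β - γ₁)*(γ₂ - β)*(α - γ₂)*((γ₃ - α) + (γ₄ - α) + (γ₅ - α)) + 10*γ₁*(β - γ₁)*(γ₂ - β)*((γ₃ - α) + (γ₄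 - α) + (γ₅ - α))^2 + 6*γ₁*(β - γ₁)*(γ₂ - β)*((γ₃ - α)*(γ₄ - α) + (γ₃ - α)*(γ₅ - α) + (γ₄ - α)*(γ₅ - α)) + 6*γ₁*(β - γ₁)*(α - γ₂)^3 + 18*γ₁*(β - γ₁)*(α - γ₂)^2*((γ₃ - α) + (γ₄ - α) + (γ₅ - α)) + 8*γ₁*(β - γ₁)*(α - γ₂)*((γ₃ - α) + (γ₄ - α) + (γ₅ - α))^2 + 6*γ₁*(β - γ₁)*(α - γ₂)*((γ₃ - α)*(γ₄ - α) + (γ₃ - α)*(γ₅ - α) + (γ₄ - α)*(γ₅ - α)) + 5*γ₁*(β - γ₁)*((γ₃ - α) + (γ₄ - α) + (γ₅ - α))*((γ₃ - α)*(γ₄ - α) + (γ₃ - α)*(γ₅ - α) + (γ₄ - α)*(γ₅ - α)) - 3*γ₁*(β - γ₁)*((γ₃ - α)*(γ₄ - α)*(γ₅ - α)) + 5*γ₁*(γ₂ - β)^4 + 16*γ₁*(γ₂ - β)^3*(α - γ₂) + 12*γ₁*(γ₂ - β)^3*((γ₃ - α) + (γ₄ - α) + (γ₅ - α)) + 18*γ₁*(γ₂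 - β)^2*(α - γ₂)^2 + 30*γ₁*(γ₂ - β)^2*(α - γ₂)*((γ₃ - α) + (γ₄ - α) + (γ₅ - α)) + 6*γ₁*(γ₂ - β)^2*((γ₃ - α) + (γ₄ - α) + (γ₅ - α))^2 + 6*γ₁*(γ₂ - β)^2*((γ₃ - α)*(γ₄ - α) + (γ₃ - α)*(γ₅ - α) + (γ₄ - α)*(γ₅ - α)) + 8*γ₁*(γ₂ - β)*(α - γ₂)^3 + 24*γ₁*(γ₂ - β)*(α - γ₂)^2*((γ₃ - α) + (γ₄ - α) + (γ₅ - α)) + 10*γ₁*(γ₂ - β)*(α - γ₂)*((γ₃ - α) + (γ₄ - α) + (γ₅ - α))^2 + 10*γ₁*(γ₂ - β)*(α - γ₂)*((γ₃ - α)*(γ₄ - α) + (γ₃ - α)*(γ₅ - α) + (γ₄ - α)*(γ₅ - α)) + 6*γ₁*(γ₂ - β)*((γ₃ - α) + (γ₄ - α) + (γ₅ - α))*((γ₃ - α)*(γ₄ - α) + (γ₃ - α)*(γ₅ - α) + (γ₄ - α)*(γ₅ - α)) + 2*γ₁*(γ₂ - β)*((γ₃ - α)*(γ₄ - α)*(γ₅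 - α)) + γ₁*(α - γ₂)^4 + 6*γ₁*(α - γ₂)^3*((γ₃ - α) + (γ₄ - α) + (γ₅ - α)) + 4*γ₁*(α - γ₂)^2*((γ₃ - α) + (γ₄ - α) + (γ₅ - α))^2 + 4*γ₁*(α - γ₂)^2*((γ₃ - α)*(γ₄ - α) + (γ₃ - α)*(γ₅ - α) + (γ₄ - α)*(γ₅ - α)) + 5*γ₁*(α - γ₂)*((γ₃ - α) + (γ₄ - α) + (γ₅ - α))*((γ₃ - α)*(γ₄ - α) + (γ₃ - α)*(γ₅ - α) + (γ₄ - α)*(γ₅ - α)) + γ₁*(α - γ₂)*((γ₃ - α)*(γ₄ - α)*(γ₅ - α)) + 2*γ₁*((γ₃ - α) + (γ₄ - α) + (γ₅ - α))*((γ₃ - α)*(γ₄ - α)*(γ₅ - α)) + γ₁*((γ₃ - α)*(γ₄ - α) + (γ₃ - α)*(γ₅ - α) + (γ₄ - α)*(γ₅ - α))^2 + (β - γ₁)^5 + 5*(β - γ₁)^4*(γ₂ - β) + 3*(β - γ₁)^4*(α - γ₂) + (β - γ₁)^4*((γ₃ - α) + (γ₄ - α) + (γ₅ - α)) + 10*(β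 - γ₁)^3*(γ₂ - β)^2 + 13*(β - γ₁)^3*(γ₂ - β)*(α - γ₂) + 6*(β - γ₁)^3*(γ₂ - β)*((γ₃ - α) + (γ₄ - α) + (γ₅ - α)) + 3*(β - γ₁)^3*(α - γ₂)^2 + 4*(β - γ₁)^3*(α - γ₂)*((γ₃ - α) + (γ₄ - α) + (γ₅ - α)) + (β - γ₁)^3*((γ₃ - α) + (γ₄ - α) + (γ₅ - α))^2 + 10*(β - γ₁)^2*(γ₂ - β)^3 + 21*(β - γ₁)^2*(γ₂ - β)^2*(α - γ₂) + 12*(β - γ₁)^2*(γ₂ - β)^2*((γ₃ - α) + (γ₄ - α) + (γ₅ - α)) + 12*(β - γ₁)^2*(γ₂ - β)*(α - γ₂)^2 + 18*(β - γ₁)^2*(γ₂ - β)*(α - γ₂)*((γ₃ - α) + (γ₄ - α) + (γ₅ - α)) + 4*(β - γ₁)^2*(γ₂ - β)*((γ₃ - α) + (γ₄ - α) + (γ₅ - α))^2 + 2*(β - γ₁)^2*(γ₂ - β)*((γ₃ - α)*(γ₄ - α) + (γ₃ - α)*(γ₅ - α) + (γ₄ - α)*(γ₅ - α)) + (β - γ₁)^2*(α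 - γ₂)^3 + 6*(β - γ₁)^2*(α - γ₂)^2*((γ₃ - α) + (γ₄ - α) + (γ₅ - α)) + 3*(β - γ₁)^2*(α - γ₂)*((γ₃ - α) + (γ₄ - α) + (γ₅ - α))^2 + 2*(β - γ₁)^2*(α - γ₂)*((γ₃ - α)*(γ₄ - α) + (γ₃ - α)*(γ₅ - α) + (γ₄ - α)*(γ₅ - α)) + 2*(β - γ₁)^2*((γ₃ - α) + (γ₄ - α) + (γ₅ - α))*((γ₃ - α)*(γ₄ - α) + (γ₃ - α)*(γ₅ - α) + (γ₄ - α)*(γ₅ - α)) - 2*(β - γ₁)^2*((γ₃ - α)*(γ₄ - α)*(γ₅ - α)) + 5*(β - γ₁)*(γ₂ - β)^4 + 15*(β - γ₁)*(γ₂ - β)^3*(α - γ₂) + 10*(β - γ₁)*(γ₂ - β)^3*((γ₃ - α) + (γ₄ - α) + (γ₅ - α)) + 15*(β - γ₁)*(γ₂ - β)^2*(α - γ₂)^2 + 24*(β - γ₁)*(γ₂ - β)^2*(α - γ₂)*((γ₃ - α) + (γ₄ - α) + (γ₅ - α)) + 5*(β - γ₁)*(γ₂ - β)^2*((γ₃ -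 α) + (γ₄ - α) + (γ₅ - α))^2 + 4*(β - γ₁)*(γ₂ - β)^2*((γ₃ - α)*(γ₄ - α) + (γ₃ - α)*(γ₅ - α) + (γ₄ - α)*(γ₅ - α)) + 5*(β - γ₁)*(γ₂ - β)*(α - γ₂)^3 + 18*(β - γ₁)*(γ₂ - β)*(α - γ₂)^2*((γ₃ - α) + (γ₄ - α) + (γ₅ - α)) + 8*(β - γ₁)*(γ₂ - β)*(α - γ₂)*((γ₃ - α) + (γ₄ - α) + (γ₅ - α))^2 + 7*(β - γ₁)*(γ₂ - β)*(α - γ₂)*((γ₃ - α)*(γ₄ - α) + (γ₃ - α)*(γ₅ - α) + (γ₄ - α)*(γ₅ - α)) + 5*(β - γ₁)*(γ₂ - β)*((γ₃ - α) + (γ₄ - α) + (γ₅ - α))*((γ₃ - α)*(γ₄ - α) + (γ₃ - α)*(γ₅ - α) + (γ₄ - α)*(γ₅ - α)) - (β - γ₁)*(γ₂ - β)*((γ₃ - α)*(γ₄ - α)*(γ₅ - α)) + 4*(β - γ₁)*(α - γ₂)^3*((γ₃ - α) + (γ₄ - α) + (γ₅ - α)) + 3*(β - γ₁)*(α - γ₂)^2*((γ₃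 - α) + (γ₄ - α) + (γ₅ - α))^2 + 3*(β - γ₁)*(α - γ₂)^2*((γ₃ - α)*(γ₄ - α) + (γ₃ - α)*(γ₅ - α) + (γ₄ - α)*(γ₅ - α)) + 4*(β - γ₁)*(α - γ₂)*((γ₃ - α) + (γ₄ - α) + (γ₅ - α))*((γ₃ - α)*(γ₄ - α) + (γ₃ - α)*(γ₅ - α) + (γ₄ - α)*(γ₅ - α)) + (β - γ₁)*((γ₃ - α) + (γ₄ - α) + (γ₅ - α))*((γ₃ - α)*(γ₄ - α)*(γ₅ - α)) + (β - γ₁)*((γ₃ - α)*(γ₄ - α) + (γ₃ - α)*(γ₅ - α) + (γ₄ - α)*(γ₅ - α))^2 + (γ₂ - β)^5 + 4*(γ₂ - β)^4*(α - γ₂) + 3*(γ₂ - β)^4*((γ₃ - α) + (γ₄ - α) + (γ₅ - α)) + 6*(γ₂ - β)^3*(α - γ₂)^2 + 10*(γ₂ - β)^3*(α - γ₂)*((γ₃ - α) + (γ₄ - α) + (γ₅ - α)) + 2*(γ₂ - β)^3*((γ₃ - α) + (γ₄ - α) + (γ₅ - α))^2 + 2*(γ₂ - β)^3*((γ₃ -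 α)*(γ₄ - α) + (γ₃ - α)*(γ₅ - α) + (γ₄ - α)*(γ₅ - α)) + 4*(γ₂ - β)^2*(α - γ₂)^3 + 12*(γ₂ - β)^2*(α - γ₂)^2*((γ₃ - α) + (γ₄ - α) + (γ₅ - α)) + 5*(γ₂ - β)^2*(α - γ₂)*((γ₃ - α) + (γ₄ - α) + (γ₅ - α))^2 + 5*(γ₂ - β)^2*(α - γ₂)*((γ₃ - α)*(γ₄ - α) + (γ₃ - α)*(γ₅ - α) + (γ₄ - α)*(γ₅ - α)) + 3*(γ₂ - β)^2*((γ₃ - α) + (γ₄ - α) + (γ₅ - α))*((γ₃ - α)*(γ₄ - α) + (γ₃ - α)*(γ₅ - α) + (γ₄ - α)*(γ₅ - α)) + (γ₂ - β)^2*((γ₃ - α)*(γ₄ - α)*(γ₅ - α)) + (γ₂ - β)*(α - γ₂)^4 + 6*(γ₂ - β)*(α - γ₂)^3*((γ₃ - α) + (γ₄ - α) + (γ₅ - α)) + 4*(γ₂ - β)*(α - γ₂)^2*((γ₃ - α) + (γ₄ - α) + (γ₅ - α))^2 + 4*(γ₂ - β)*(α - γ₂)^2*((γ₃ - α)*(γ₄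 - α) + (γ₃ - α)*(γ₅ - α) + (γ₄ - α)*(γ₅ - α)) + 5*(γ₂ - β)*(α - γ₂)*((γ₃ - α) + (γ₄ - α) + (γ₅ - α))*((γ₃ - α)*(γ₄ - α) + (γ₃ - α)*(γ₅ - α) + (γ₄ - α)*(γ₅ - α)) + (γ₂ - β)*(α - γ₂)*((γ₃ - α)*(γ₄ - α)*(γ₅ - α)) + 2*(γ₂ - β)*((γ₃ - α) + (γ₄ - α) + (γ₅ - α))*((γ₃ - α)*(γ₄ - α)*(γ₅ - α)) + (γ₂ - β)*((γ₃ - α)*(γ₄ - α) + (γ₃ - α)*(γ₅ - α) + (γ₄ - α)*(γ₅ - α))^2 + (α - γ₂)^4*((γ₃ - α) + (γ₄ - α) + (γ₅ - α)) + (α - γ₂)^3*((γ₃ - α) + (γ₄ - α) + (γ₅ - α))^2 + (α - γ₂)^3*((γ₃ - α)*(γ₄ - α) + (γ₃ - α)*(γ₅ - α) + (γ₄ - α)*(γ₅ - α)) + 2*(α - γ₂)^2*((γ₃ - α) + (γ₄ - α) + (γ₅ - α))*((γ₃ - α)*(γ₄ - α) + (γ₃ - α)*(γ₅ - α) + (γ₄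 - α)*(γ₅ - α)) + (α - γ₂)*((γ₃ - α) + (γ₄ - α) + (γ₅ - α))*((γ₃ - α)*(γ₄ - α)*(γ₅ - α)) + (α - γ₂)*((γ₃ - α)*(γ₄ - α) + (γ₃ - α)*(γ₅ - α) + (γ₄ - α)*(γ₅ - α))^2 + ((γ₃ - α)*(γ₄ - α) + (γ₃ - α)*(γ₅ - α) + (γ₄ - α)*(γ₅ - α))*((γ₃ - α)*(γ₄ - α)*(γ₅ - α)) := by
    ring
  rw [← hid] at hkey
  have hg3pos : (0:ℝ) < γ₃*γ₄*γ₅ := by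
    have e3 : (0:ℝ) < γ₃ := by linarith
    have e4 : (0:ℝ) < γ₄ := by linarith
    have e5 : (0:ℝ) < γ₅ := by linarith
    positivity
  nlinarith [mul_neg_of_pos_of_neg hg3pos hS2]
end

section
/- Let P_1 and P_2 be monic real polynomials of degrees d_1 and d_2 respectively, all of whose coefficients are nonzero. For ε > 0 set P† := ε^{d_2}·P_1(x)·P_2(x/ε), a monic polynomial of degree d_1+d_2. Then there exists ε_0 > 0 such that for all ε ∈ (0,ε_0): for every k with d_2 ≤ k ≤ d_1+d_2, the sign of the coefficient of x^k in P† equals the sign of the coefficient of x^{k−d_2} in P_1; and for every k with 0 ≤ k < d_2, the sign of the coefficient of x^k in P† equals the product of the sign of the constant coefficient of P_1 and the sign of the coefficient of x^k in P_2. -/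
/-!
Write `P₂^ε := ε^{d₂} P₂(x/ε)`, which is `P₂.scaleRoots ε`, so that `P† = P₁ · P₂^ε`. As `ε → 0`,
`P₂^ε → x^{d₂}` coefficientwise, so the coefficient of `x^k` in `P†` tends to that of
`P₁ · x^{d₂}`, which is the coefficient of `x^{k-d₂}` in `P₁` when `k ≥ d₂`. For `k < d₂` this
limit is `0`, but then `P†(εy) = ε^{d₂} P₁(εy) P₂(y)` shows that the coefficient equals
`ε^{d₂-k}` times the coefficient of `y^k` in `P₁(εy) P₂(y)`, which tends to `P₁(0) · [y^k] P₂`.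
-/

open Polynomial Filter Topology

theorem Real.sign_mul (a b : ℝ) : Real.sign (a * b) = Real.sign a * Real.sign b := by
  rcases lt_trichotomy a 0 with ha | rfl | ha <;> rcases lt_trichotomy b 0 with hb | rfl | hb <;>
    simp [Real.sign_of_neg, Real.sign_of_pos, mul_pos_of_neg_of_neg, mul_neg_of_neg_of_pos,
      mul_neg_of_pos_of_neg, *]

theorem Filter.Tendsto.eventually_sign_eq {α : Type*} {l : Filter α} {f : α → ℝ} {a : ℝ}
    (hf : Tendsto f l (𝓝 a)) (ha : a ≠ 0) : ∀ᶠ x in l, Real.sign (f x) = Real.sign a := by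
  rcases ha.lt_or_gt with ha | ha
  · filter_upwards [hf.eventually (gt_mem_nhds ha)] with x hx
    rw [Real.sign_of_neg hx, Real.sign_of_neg ha]
  · filter_upwards [hf.eventually (lt_mem_nhds ha)] with x hx
    rw [Real.sign_of_pos hx, Real.sign_of_pos ha]

namespace Polynomial

theorem continuous_coeff_mul {X R : Type*} [TopologicalSpace X] [Semiring R] [TopologicalSpace R]
    [IsTopologicalSemiring R] {F G : X → R[X]} (hF : ∀ j, Continuous fun x ↦ (F x).coeff j)
    (hG : ∀ j, Continuous fun x ↦ (G x).coeff j) (k : ℕ) :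
    Continuous fun x ↦ (F x * G x).coeff k := by
  simp only [coeff_mul]
  exact continuous_finsetSum _ fun ij _ ↦ (hF ij.1).mul (hG ij.2)

theorem C_pow_natDegree_mul_comp_C_inv_mul_X {K : Type*} [Field K] (p : K[X]) {s : K}
    (hs : s ≠ 0) : C (s ^ p.natDegree) * p.comp (C s⁻¹ * X) = p.scaleRoots s := by
  ext i
  rw [coeff_C_mul, comp_C_mul_X_coeff, coeff_scaleRoots]
  rcases le_or_gt i p.natDegree with hi | hi
  · rw [pow_sub₀ s hs hi, inv_pow]
    ring
  · simp [coeff_eq_zero_of_natDegree_lt hi]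

theorem coeff_mul_scaleRoots_of_le_natDegree {R : Type*} [CommSemiring R] (p q : R[X]) (s : R)
    {k : ℕ} (hk : k ≤ q.natDegree) :
    (p * q.scaleRoots s).coeff k = s ^ (q.natDegree - k) * (p.comp (C s * X) * q).coeff k := by
  rw [coeff_mul, coeff_mul, Finset.mul_sum]
  refine Finset.sum_congr rfl fun ij hij ↦ ?_
  have hsum : ij.1 + ij.2 = k := Finset.HasAntidiagonal.mem_antidiagonal.1 hij
  rw [coeff_scaleRoots, comp_C_mul_X_coeff,
    show q.natDegree - ij.2 = q.natDegree - k + ij.1 by omega, pow_add]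
  ring

theorem eventually_sign_coeff_mul_scaleRoots_of_natDegree_le (p q : ℝ[X]) (hq : q.Monic)
    {k : ℕ} (hk : q.natDegree ≤ k) (hp : p.coeff (k - q.natDegree) ≠ 0) :
    ∀ᶠ s in 𝓝 0, Real.sign ((p * q.scaleRoots s).coeff k)
      = Real.sign (p.coeff (k - q.natDegree)) := by
  have hcont : Continuous fun s ↦ (p * q.scaleRoots s).coeff k :=
    continuous_coeff_mul (fun _ ↦ continuous_const)
      (fun j ↦ by simp only [coeff_scaleRoots]; fun_prop) k
  have hzero : (p * q.scaleRoots 0).coeff k = p.coeff (k - q.natDegree) := by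
    rw [scaleRoots_zero, hq.leadingCoeff, one_smul, coeff_mul_X_pow', if_pos hk]
  simpa only [hzero] using (hcont.tendsto 0).eventually_sign_eq (hzero ▸ hp)

theorem eventually_sign_coeff_mul_scaleRoots_of_lt_natDegree (p q : ℝ[X]) {k : ℕ}
    (hk : k < q.natDegree) (hp : p.coeff 0 ≠ 0) (hq : q.coeff k ≠ 0) :
    ∀ᶠ s in 𝓝[>] 0, Real.sign ((p * q.scaleRoots s).coeff k)
      = Real.sign (p.coeff 0) * Real.sign (q.coeff k) := by
  have hcont : Continuous fun s ↦ (p.comp (C s * X) * q).coeff k :=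
    continuous_coeff_mul (fun j ↦ by simp only [comp_C_mul_X_coeff]; fun_prop)
      (fun _ ↦ continuous_const) k
  have hzero : (p.comp (C 0 * X) * q).coeff k = p.coeff 0 * q.coeff k := by
    rw [C_0, zero_mul, comp_zero, ← coeff_zero_eq_eval_zero, coeff_C_mul]
  have hsign := (hcont.tendsto 0).eventually_sign_eq (hzero ▸ mul_ne_zero hp hq)
  filter_upwards [self_mem_nhdsWithin, nhdsWithin_le_nhds hsign] with s (hs : 0 < s) hs'
  rw [coeff_mul_scaleRoots_of_le_natDegree p q s hk.le, Real.sign_mul,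
    Real.sign_of_pos (pow_pos hs _), one_mul, hs', hzero, Real.sign_mul]

end Polynomial

theorem stmt12_general (P₁ P₂ : Polynomial ℝ) (d₁ d₂ : ℕ)
    (h₂ : P₂.Monic)
    (hd₂ : P₂.natDegree = d₂)
    (hnz₁ : ∀ k ≤ d₁, P₁.coeff k ≠ 0) (hnz₂ : ∀ k ≤ d₂, P₂.coeff k ≠ 0) :
    ∃ ε₀ > (0 : ℝ), ∀ ε : ℝ, 0 < ε → ε < ε₀ →
      (∀ k, d₂ ≤ k → k ≤ d₁ + d₂ →
        Real.sign ((C (ε ^ d₂) * (P₁ * P₂.comp (C ε⁻¹ * X))).coeff k)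
          = Real.sign (P₁.coeff (k - d₂))) ∧
      (∀ k, k < d₂ →
        Real.sign ((C (ε ^ d₂) * (P₁ * P₂.comp (C ε⁻¹ * X))).coeff k)
          = Real.sign (P₁.coeff 0) * Real.sign (P₂.coeff k)) := by
  subst hd₂
  have hhigh := (eventually_all_finset (l := 𝓝[>] 0)
    (Finset.Icc P₂.natDegree (d₁ + P₂.natDegree))).2 fun k hk ↦ nhdsWithin_le_nhds <|
      eventually_sign_coeff_mul_scaleRoots_of_natDegree_le P₁ P₂ h₂ (Finset.mem_Icc.1 hk).1
        (hnz₁ _ (by grind))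
  have hlow := (eventually_all_finset (Finset.range P₂.natDegree)).2
    fun k hk ↦ eventually_sign_coeff_mul_scaleRoots_of_lt_natDegree P₁ P₂
      (Finset.mem_range.1 hk) (hnz₁ 0 d₁.zero_le) (hnz₂ k (Finset.mem_range.1 hk).le)
  obtain ⟨ε₀, hε₀, hsmall⟩ := (nhdsGT_basis 0).eventually_iff.1 (hhigh.and hlow)
  refine ⟨ε₀, hε₀, fun ε hε hεε₀ ↦ ?_⟩
  obtain ⟨hhighε, hlowε⟩ := hsmall ⟨hε, hεε₀⟩
  rw [mul_left_comm, C_pow_natDegree_mul_comp_C_inv_mul_X P₂ hε.ne']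
  exact ⟨fun k hk₁ hk₂ ↦ hhighε k (Finset.mem_Icc.2 ⟨hk₁, hk₂⟩),
    fun k hk ↦ hlowε k (Finset.mem_range.2 hk)⟩

/-- Concatenation lemma: for monic real polynomials `P₁`, `P₂` of degrees `d₁`,
`d₂` with all coefficients nonzero, set `P† := ε^{d₂} · P₁(x) · P₂(x/ε)`. Then
for all sufficiently small `ε > 0`: for `d₂ ≤ k ≤ d₁ + d₂` the sign of the
coefficient of `x^k` in `P†` equals the sign of the coefficient of `x^{k-d₂}`
in `P₁`, and for `0 ≤ k < d₂` it equals the product of the sign of the constant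
coefficient of `P₁` and the sign of the coefficient of `x^k` in `P₂`. -/
theorem stmt12 (P₁ P₂ : Polynomial ℝ) (d₁ d₂ : ℕ)
    (h₁ : P₁.Monic) (h₂ : P₂.Monic)
    (hd₁ : P₁.natDegree = d₁) (hd₂ : P₂.natDegree = d₂)
    (hnz₁ : ∀ k ≤ d₁, P₁.coeff k ≠ 0) (hnz₂ : ∀ k ≤ d₂, P₂.coeff k ≠ 0) :
    ∃ ε₀ > (0 : ℝ), ∀ ε : ℝ, 0 < ε → ε < ε₀ →
      (∀ k, d₂ ≤ k → k ≤ d₁ + d₂ →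
        Real.sign ((C (ε ^ d₂) * (P₁ * P₂.comp (C ε⁻¹ * X))).coeff k)
          = Real.sign (P₁.coeff (k - d₂))) ∧
      (∀ k, k < d₂ →
        Real.sign ((C (ε ^ d₂) * (P₁ * P₂.comp (C ε⁻¹ * X))).coeff k)
          = Real.sign (P₁.coeff 0) * Real.sign (P₂.coeff k)) :=
  stmt12_general P₁ P₂ d₁ d₂ h₂ hd₂ hnz₁ hnz₂
end

section
/- Let ρ(A,B,C) := 4A³C − A²B² − 18ABC + 4B³ + 27C². If A > 0, A/2 ≤ C ≤ 2A, 1/2 ≤ B ≤ 2, and at least one of the equalities C = A/2, C = 2A, B = 1/2, B = 2 holds, then ρ(A,B,C) > 0. In particular, the set {ρ = 0} does not intersect the boundary of the domain D := {(A,B,C) : 0 < A/2 < C < 2A, 1/2 < B < 2}. -/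
/-- Lemma 9: with `ρ(A,B,C) := 4A³C − A²B² − 18ABC + 4B³ + 27C²`, if `A > 0`,
`A/2 ≤ C ≤ 2A`, `1/2 ≤ B ≤ 2` and at least one of `C = A/2`, `C = 2A`,
`B = 1/2`, `B = 2` holds, then `ρ(A,B,C) > 0`; in particular the set `{ρ = 0}`
does not intersect the boundary of
`D := {(A,B,C) : 0 < A/2 < C < 2A, 1/2 < B < 2}`. -/
theorem stmt13 :
    (∀ A B C : ℝ, 0 < A → A / 2 ≤ C → C ≤ 2 * A → 1 / 2 ≤ B → B ≤ 2 →
      (C = A / 2 ∨ C = 2 * A ∨ B = 1 / 2 ∨ B = 2) →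
      0 < 4 * A ^ 3 * C - A ^ 2 * B ^ 2 - 18 * A * B * C + 4 * B ^ 3 + 27 * C ^ 2) ∧
    (∀ p ∈ frontier {x : ℝ × ℝ × ℝ |
        0 < x.1 / 2 ∧ x.1 / 2 < x.2.2 ∧ x.2.2 < 2 * x.1 ∧
        1 / 2 < x.2.1 ∧ x.2.1 < 2},
      4 * p.1 ^ 3 * p.2.2 - p.1 ^ 2 * p.2.1 ^ 2 - 18 * p.1 * p.2.1 * p.2.2
        + 4 * p.2.1 ^ 3 + 27 * p.2.2 ^ 2 ≠ 0) := by
  have key : ∀ A B C : ℝ, 0 < A → A / 2 ≤ C → C ≤ 2 * A → 1 / 2 ≤ B → B ≤ 2 →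
      (C = A / 2 ∨ C = 2 * A ∨ B = 1 / 2 ∨ B = 2) →
      0 < 4 * A ^ 3 * C - A ^ 2 * B ^ 2 - 18 * A * B * C + 4 * B ^ 3 + 27 * C ^ 2 := by
    intro A B C hA h1 h2 hB1 hB2 hcase
    rcases hcase with rfl | rfl | rfl | rfl
    · rcases le_or_gt B (69/100) with h | h
      · nlinarith [mul_pos hA hA, sq_nonneg A, mul_nonneg (mul_pos hA hA).le (sub_nonneg.2 hB1),
          mul_nonneg (mul_pos hA hA).le (sub_nonneg.2 h), sq_nonneg (A^2)]
      · nlinarith [sq_nonneg (4*A^2 - (B^2 + 9*B - 27/4)),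
          mul_nonneg (sub_nonneg.2 h.le) (sub_nonneg.2 hB2),
          sq_nonneg (B - 2), sq_nonneg (B - 69/100),
          mul_nonneg (mul_nonneg (sub_nonneg.2 h.le) (sub_nonneg.2 hB2)) (sub_nonneg.2 hB2),
          mul_nonneg (mul_nonneg (sub_nonneg.2 h.le) (sub_nonneg.2 h.le)) (sub_nonneg.2 hB2)]
    · nlinarith [mul_pos hA hA, sq_nonneg B, mul_nonneg (mul_pos hA hA).le (sub_nonneg.2 hB2),
        sq_nonneg (B-2)]
    · nlinarith [mul_nonneg (sub_nonneg.2 h1) (sub_nonneg.2 h2), sq_nonneg (A^2 - 1),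
        sq_nonneg (A*C - 1), mul_pos hA hA, sq_nonneg C, sq_nonneg (3*C - A),
        mul_nonneg hA.le (sub_nonneg.2 h1)]
    · nlinarith [mul_nonneg (sub_nonneg.2 h1) (sub_nonneg.2 h2), sq_nonneg (A^2 - 2),
        sq_nonneg (A*C - 2), mul_pos hA hA, sq_nonneg (3*C - A), sq_nonneg (2*A^2 - 3),
        mul_nonneg (mul_nonneg hA.le hA.le) (sub_nonneg.2 h1),
        mul_nonneg (mul_nonneg hA.le hA.le) (sub_nonneg.2 h2)]
  refine ⟨key, ?_⟩
  intro p hp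
  set S : Set (ℝ × ℝ × ℝ) := {x : ℝ × ℝ × ℝ |
      0 < x.1 / 2 ∧ x.1 / 2 < x.2.2 ∧ x.2.2 < 2 * x.1 ∧
      1 / 2 < x.2.1 ∧ x.2.1 < 2} with hS
  have hopen : IsOpen S := by
    have h1 : IsOpen {x : ℝ × ℝ × ℝ | 0 < x.1 / 2} :=
      isOpen_lt continuous_const (continuous_fst.div_const 2)
    have h2 : IsOpen {x : ℝ × ℝ × ℝ | x.1 / 2 < x.2.2} :=
      isOpen_lt (continuous_fst.div_const 2) continuous_snd.snd
    have h3 : IsOpen {x : ℝ × ℝ × ℝ | x.2.2 < 2 * x.1} :=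
      isOpen_lt continuous_snd.snd (continuous_const.mul continuous_fst)
    have h4 : IsOpen {x : ℝ × ℝ × ℝ | 1 / 2 < x.2.1} :=
      isOpen_lt continuous_const continuous_snd.fst
    have h5 : IsOpen {x : ℝ × ℝ × ℝ | x.2.1 < 2} :=
      isOpen_lt continuous_snd.fst continuous_const
    have : S = {x : ℝ × ℝ × ℝ | 0 < x.1 / 2} ∩ {x | x.1 / 2 < x.2.2} ∩ {x | x.2.2 < 2 * x.1}
        ∩ {x | 1 / 2 < x.2.1} ∩ {x | x.2.1 < 2} := by
      ext x; simp [hS, Set.mem_setOf_eq, and_assoc]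
    rw [this]
    exact ((((h1.inter h2).inter h3).inter h4).inter h5)
  have hTclosed : IsClosed {x : ℝ × ℝ × ℝ |
      0 ≤ x.1 / 2 ∧ x.1 / 2 ≤ x.2.2 ∧ x.2.2 ≤ 2 * x.1 ∧ 1 / 2 ≤ x.2.1 ∧ x.2.1 ≤ 2} := by
    have h1 : IsClosed {x : ℝ × ℝ × ℝ | 0 ≤ x.1 / 2} :=
      isClosed_le continuous_const (continuous_fst.div_const 2)
    have h2 : IsClosed {x : ℝ × ℝ × ℝ | x.1 / 2 ≤ x.2.2} :=
      isClosed_le (continuous_fst.div_const 2) continuous_snd.snd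
    have h3 : IsClosed {x : ℝ × ℝ × ℝ | x.2.2 ≤ 2 * x.1} :=
      isClosed_le continuous_snd.snd (continuous_const.mul continuous_fst)
    have h4 : IsClosed {x : ℝ × ℝ × ℝ | 1 / 2 ≤ x.2.1} :=
      isClosed_le continuous_const continuous_snd.fst
    have h5 : IsClosed {x : ℝ × ℝ × ℝ | x.2.1 ≤ 2} :=
      isClosed_le continuous_snd.fst continuous_const
    have : {x : ℝ × ℝ × ℝ |
        0 ≤ x.1 / 2 ∧ x.1 / 2 ≤ x.2.2 ∧ x.2.2 ≤ 2 * x.1 ∧ 1 / 2 ≤ x.2.1 ∧ x.2.1 ≤ 2}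
        = {x : ℝ × ℝ × ℝ | 0 ≤ x.1 / 2} ∩ {x | x.1 / 2 ≤ x.2.2} ∩ {x | x.2.2 ≤ 2 * x.1}
        ∩ {x | 1 / 2 ≤ x.2.1} ∩ {x | x.2.1 ≤ 2} := by
      ext x; simp [Set.mem_setOf_eq, and_assoc]
    rw [this]
    exact ((((h1.inter h2).inter h3).inter h4).inter h5)
  have hsub : closure S ⊆ {x : ℝ × ℝ × ℝ |
      0 ≤ x.1 / 2 ∧ x.1 / 2 ≤ x.2.2 ∧ x.2.2 ≤ 2 * x.1 ∧ 1 / 2 ≤ x.2.1 ∧ x.2.1 ≤ 2} := by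
    apply closure_minimal _ hTclosed
    rintro x ⟨a, b, c, d, e⟩
    exact ⟨a.le, b.le, c.le, d.le, e.le⟩
  have hcl : p ∈ closure S := hp.1
  have hni : p ∉ S := by
    intro h
    exact hp.2 (by rwa [hopen.interior_eq])
  obtain ⟨t0, t1, t2, t3, t4⟩ := hsub hcl
  obtain ⟨A, B, C⟩ := p
  simp only [Set.mem_setOf_eq] at t0 t1 t2 t3 t4 hni ⊢
  rcases le_or_gt A 0 with hA | hA
  · -- A = 0, C = 0
    have hA0 : A = 0 := le_antisymm hA (by linarith)
    have hC0 : C = 0 := le_antisymm (by simp [hA0] at t2; linarith) (by simp [hA0] at t1; linarith)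
    subst hA0; subst hC0
    intro h
    nlinarith [sq_nonneg B, sq_nonneg (B - 1/2)]
  · have hboundary : C = A / 2 ∨ C = 2 * A ∨ B = 1 / 2 ∨ B = 2 := by
      by_contra hcon
      push_neg at hcon
      obtain ⟨e1, e2, e3, e4⟩ := hcon
      exact hni ⟨by linarith, lt_of_le_of_ne t1 (fun h => e1 h.symm),
        lt_of_le_of_ne t2 e2, lt_of_le_of_ne t3 (fun h => e3 h.symm), lt_of_le_of_ne t4 e4⟩
    have := key A B C hA t1 t2 t3 t4 hboundary
    exact ne_of_gt this
end

section
/- For all real A, B, C with A > 0, A/2 < C < 2A and 1/2 < B < 2, one has 4A³C − A²B² − 18ABC + 4B³ + 27C² > 0. Consequently, there is no cubic polynomial W = x³ + Ax² + Bx + C with A,B,C > 0 having three real roots (all of them then necessarily negative) and satisfying A − 2C < 0, 1 − 2B < 0, −2A + C < 0 and B − 2 < 0. -/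
open Polynomial

/-- For `A > 0`, `A/2 < C < 2A` and `1/2 < B < 2` one has
`4A³C − A²B² − 18ABC + 4B³ + 27C² > 0`; consequently there is no cubic
`W = x³ + Ax² + Bx + C` with `A, B, C > 0` having three real roots and
satisfying `A − 2C < 0`, `1 − 2B < 0`, `−2A + C < 0` and `B − 2 < 0`. -/
theorem stmt14 :
    (∀ A B C : ℝ, 0 < A → A / 2 < C → C < 2 * A → 1 / 2 < B → B < 2 →
      0 < 4 * A ^ 3 * C - A ^ 2 * B ^ 2 - 18 * A * B * C + 4 * B ^ 3 + 27 * C ^ 2) ∧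
    (∀ A B C : ℝ, 0 < A → 0 < B → 0 < C →
      A - 2 * C < 0 → 1 - 2 * B < 0 → -2 * A + C < 0 → B - 2 < 0 →
      ¬ ∃ x y z : ℝ,
        (X ^ 3 + Polynomial.C A * X ^ 2 + Polynomial.C B * X + Polynomial.C C : Polynomial ℝ)
          = (X - Polynomial.C x) * (X - Polynomial.C y) * (X - Polynomial.C z)) := by
  have part1 : ∀ A B C : ℝ, 0 < A → A / 2 < C → C < 2 * A → 1 / 2 < B → B < 2 →
      0 < 4 * A ^ 3 * C - A ^ 2 * B ^ 2 - 18 * A * B * C + 4 * B ^ 3 + 27 * C ^ 2 := by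
    intro A B C hA h1 _h2 h3 h4
    have key : 4 * A ^ 3 * C - A ^ 2 * B ^ 2 - 18 * A * B * C + 4 * B ^ 3 + 27 * C ^ 2
        = 3 * (3*C - A*B)^2 + 4 * A^3 * (C - A/2) + 2 * (A^2 - B^2)^2 + 2 * B^3 * (2 - B) := by
      ring
    rw [key]
    have hB : 0 < B := by linarith
    have t1 : 0 ≤ 3 * (3*C - A*B)^2 := by positivity
    have t2 : 0 < 4 * A^3 * (C - A/2) := by
      have : 0 < C - A/2 := by linarith
      positivity
    have t3 : 0 ≤ 2 * (A^2 - B^2)^2 := by positivity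
    have t4 : 0 < 2 * B^3 * (2 - B) := by
      have : 0 < 2 - B := by linarith
      positivity
    linarith
  refine ⟨part1, ?_⟩
  intro A B C hA _hB _hC c1 c2 c3 c4
  rintro ⟨x, y, z, h⟩
  have e0 := congrArg (Polynomial.eval 0) h
  have e1 := congrArg (Polynomial.eval 1) h
  have e2 := congrArg (Polynomial.eval (-1)) h
  simp only [eval_add, eval_mul, eval_sub, eval_pow, eval_X, eval_C] at e0 e1 e2
  have hAx : A = -(x + y + z) := by nlinarith [e0, e1, e2]
  have hBx : B = x*y + y*z + z*x := by nlinarith [e0, e1, e2]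
  have hCx : C = -(x*y*z) := by nlinarith [e0, e1, e2]
  have hpos := part1 A B C hA (by linarith) (by linarith) (by linarith) (by linarith)
  have hneg : 4 * A ^ 3 * C - A ^ 2 * B ^ 2 - 18 * A * B * C + 4 * B ^ 3 + 27 * C ^ 2
      = -((x - y) * (y - z) * (z - x)) ^ 2 := by
    rw [hAx, hBx, hCx]; ring
  nlinarith [sq_nonneg ((x - y) * (y - z) * (z - x))]
end

section
/- Let c ∈ (0,1) and A > 0, B > 0 with A + B > 1. Write (x+1)²(x+c)²(x−1)(x² + Ax − B) = Σ_{j=0}^{7} q_j x^j. Then the coefficients q_2 = −Ac² − Bc² − 2Ac + 2Bc − c² + B and q_5 = 2Ac + c² + A − B + 2c − 1 cannot both be negative. -/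
open Polynomial

lemma expand15 (c A B : ℝ) :
    ((X + 1) ^ 2 * (X + Polynomial.C c) ^ 2 * (X - 1) *
        (X ^ 2 + Polynomial.C A * X - Polynomial.C B) : Polynomial ℝ) =
      C (c^2*B) + C (2*c*B + c^2*B - c^2*A) * X
      + C (-A * c ^ 2 - B * c ^ 2 - 2 * A * c + 2 * B * c - c ^ 2 + B) * X^2
      + C (B - A - 2*c - 2*c*B - 2*c*A - c^2 - c^2*B + c^2*A) * X^3
      + C (-1 - B - A - 2*c - 2*c*B + 2*c*A + c^2 + c^2*A) * X^4
      + C (2 * A * c + c ^ 2 + A - B + 2 * c - 1) * X ^ 5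
      + C (1 + A + 2*c) * X^6 + X^7 := by
  simp only [map_add, map_sub, map_mul, map_pow, map_neg, map_one, map_ofNat, C_0, C_1]
  ring

/-- Case B.1.2 of Proposition 6: for `c ∈ (0,1)`, `A, B > 0` with `A + B > 1`,
writing `(x+1)²(x+c)²(x−1)(x² + Ax − B) = Σ_{j=0}^{7} q_j x^j`, the coefficients
`q₂ = −Ac² − Bc² − 2Ac + 2Bc − c² + B` and `q₅ = 2Ac + c² + A − B + 2c − 1`
cannot both be negative. -/
theorem stmt15 (c A B : ℝ) (hc0 : 0 < c) (hc1 : c < 1) (hA : 0 < A) (hB : 0 < B)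
    (hAB : 1 < A + B) :
    ((X + 1) ^ 2 * (X + Polynomial.C c) ^ 2 * (X - 1) *
        (X ^ 2 + Polynomial.C A * X - Polynomial.C B) : Polynomial ℝ).coeff 2
      = -A * c ^ 2 - B * c ^ 2 - 2 * A * c + 2 * B * c - c ^ 2 + B ∧
    ((X + 1) ^ 2 * (X + Polynomial.C c) ^ 2 * (X - 1) *
        (X ^ 2 + Polynomial.C A * X - Polynomial.C B) : Polynomial ℝ).coeff 5
      = 2 * A * c + c ^ 2 + A - B + 2 * c - 1 ∧
    ¬ ((-A * c ^ 2 - B * c ^ 2 - 2 * A * c + 2 * B * c - c ^ 2 + B < 0) ∧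
       (2 * A * c + c ^ 2 + A - B + 2 * c - 1 < 0)) := by
  refine ⟨?_, ?_, ?_⟩
  · rw [expand15]
    simp only [coeff_add, coeff_C_mul, coeff_X_pow, coeff_C, coeff_X]
    norm_num
  · rw [expand15]
    simp only [coeff_add, coeff_C_mul, coeff_X_pow, coeff_C, coeff_X]
    norm_num
  · rintro ⟨h2, h5⟩
    nlinarith [mul_pos hA hc0, mul_pos hc0 hc0, mul_pos hA (mul_pos hc0 hc0), mul_pos hB hc0,
      mul_pos (mul_pos hA hc0) hc0, sq_nonneg (1-c), sq_nonneg c, mul_pos hB (mul_pos hc0 hc0),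
      mul_lt_of_lt_one_right hc0 hc1]
end

section
/- Let n ≥ 4 and let x_1, …, x_n be positive real numbers. Denote by e_j the j-th elementary symmetric polynomial of x_1,…,x_n, with e_0 = 1. Then e_{n−1}·e_{n−4} < e_{n−2}·e_{n−3}. -/
/-!
Since `e_{n-k}(x) = (∏ xᵢ) · e_k(1/x)`, the claim is `e₁ e₄ < e₂ e₃` for positive reals.
Adjoining a variable `a` to a multiset with elementary symmetric functions `tⱼ` gives
`e_{j+1} = t_{j+1} + a tⱼ`, and then
`e₂e₃ - e₁e₄ = (t₂t₃ - t₁t₄) + a (t₂² - t₄) + a² (t₁t₂ - t₃)`,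
`e₂² - e₄ = (t₂² - t₄) + a (2t₁t₂ - t₃) + a² t₁²`,
`e₁e₂ - e₃ = (t₁t₂ - t₃) + a t₁² + a² t₁`,
so all three defects are nonnegative by induction on the number of variables. For at least
three positive variables the first is positive, because `t₁t₂ - t₃ > 0` for at least two.
-/

open Finset

/-- The `j`-th elementary symmetric polynomial of `x₁, …, xₙ`
(with `e₀ = 1`). -/
def esymm {n : ℕ} (x : Fin n → ℝ) (j : ℕ) : ℝ :=
  ∑ s ∈ Finset.powersetCard j (Finset.univ : Finset (Fin n)), ∏ i ∈ s, x i

namespace Multiset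

section CommSemiring

variable {R : Type*} [CommSemiring R]

theorem esymm_zero_right (s : Multiset R) : s.esymm 0 = 1 := by
  simp [esymm]

theorem esymm_zero_left_succ (k : ℕ) : (0 : Multiset R).esymm (k + 1) = 0 := by
  simp [esymm, powersetCard_zero_right]

theorem esymm_cons_succ (a : R) (s : Multiset R) (k : ℕ) :
    (a ::ₘ s).esymm (k + 1) = s.esymm (k + 1) + a * s.esymm k := by
  simp only [esymm, powersetCard_cons, map_add, sum_add, map_map, Function.comp_def, prod_cons,
    sum_map_mul_left]

end CommSemiring

variable {R : Type*} [CommRing R] [LinearOrder R] [IsStrictOrderedRing R] {s : Multiset R}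

theorem esymm_nonneg (hs : ∀ y ∈ s, 0 ≤ y) (k : ℕ) : 0 ≤ s.esymm k :=
  sum_nonneg fun _ hz ↦ by
    obtain ⟨t, ht, rfl⟩ := mem_map.1 hz
    exact prod_nonneg fun y hy ↦ hs y (mem_of_le (mem_powersetCard.1 ht).1 hy)

theorem esymm_pos (hs : ∀ y ∈ s, 0 < y) {k : ℕ} (hk : k ≤ card s) : 0 < s.esymm k := by
  induction s using Multiset.induction generalizing k with
  | empty => simp [Nat.le_zero.1 hk, esymm_zero_right]
  | cons a t ih =>
    rcases k with _ | k
    · simp [esymm_zero_right]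
    rw [esymm_cons_succ]
    have ht : ∀ y ∈ t, 0 < y := fun y hy ↦ hs y (mem_cons_of_mem hy)
    have := esymm_nonneg (fun y hy ↦ (ht y hy).le) (k + 1)
    have := mul_pos (hs a (mem_cons_self a t)) (ih ht (by simpa using hk))
    linarith

theorem esymm_three_le_esymm_one_mul_esymm_two (hs : ∀ y ∈ s, 0 ≤ y) :
    s.esymm 3 ≤ s.esymm 1 * s.esymm 2 := by
  induction s using Multiset.induction with
  | empty => simp [esymm_zero_left_succ]
  | cons a t ih =>
    have ha : 0 ≤ a := hs a (mem_cons_self a t)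
    have ht : ∀ y ∈ t, 0 ≤ y := fun y hy ↦ hs y (mem_cons_of_mem hy)
    have e1 := esymm_nonneg ht 1
    simp only [esymm_cons_succ, esymm_zero_right]
    nlinarith [ih ht, mul_nonneg ha (mul_nonneg e1 e1), mul_nonneg (mul_nonneg ha ha) e1]

theorem esymm_four_le_esymm_two_sq (hs : ∀ y ∈ s, 0 ≤ y) : s.esymm 4 ≤ s.esymm 2 ^ 2 := by
  induction s using Multiset.induction with
  | empty => simp [esymm_zero_left_succ]
  | cons a t ih =>
    have ha : 0 ≤ a := hs a (mem_cons_self a t)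
    have ht : ∀ y ∈ t, 0 ≤ y := fun y hy ↦ hs y (mem_cons_of_mem hy)
    have e1 := esymm_nonneg ht 1
    have e2 := esymm_nonneg ht 2
    have h3 := esymm_three_le_esymm_one_mul_esymm_two ht
    simp only [esymm_cons_succ]
    nlinarith [ih ht, mul_le_mul_of_nonneg_left h3 ha, mul_nonneg ha (mul_nonneg e1 e2),
      mul_nonneg (mul_nonneg ha ha) (mul_nonneg e1 e1)]

theorem esymm_one_mul_esymm_four_le (hs : ∀ y ∈ s, 0 ≤ y) :
    s.esymm 1 * s.esymm 4 ≤ s.esymm 2 * s.esymm 3 := by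
  induction s using Multiset.induction with
  | empty => simp [esymm_zero_left_succ]
  | cons a t ih =>
    have ha : 0 ≤ a := hs a (mem_cons_self a t)
    have ht : ∀ y ∈ t, 0 ≤ y := fun y hy ↦ hs y (mem_cons_of_mem hy)
    have h3 := esymm_three_le_esymm_one_mul_esymm_two ht
    have h4 := esymm_four_le_esymm_two_sq ht
    simp only [esymm_cons_succ, esymm_zero_right]
    nlinarith [ih ht, mul_le_mul_of_nonneg_left h4 ha,
      mul_le_mul_of_nonneg_left h3 (mul_nonneg ha ha)]

theorem esymm_three_lt_esymm_one_mul_esymm_two (hs : ∀ y ∈ s, 0 < y) (hcard : 2 ≤ card s) :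
    s.esymm 3 < s.esymm 1 * s.esymm 2 := by
  obtain ⟨a, ha⟩ := card_pos_iff_exists_mem.1 (by omega : 0 < card s)
  obtain ⟨t, rfl⟩ := exists_cons_of_mem ha
  have ha : 0 < a := hs a (mem_cons_self a t)
  have ht : ∀ y ∈ t, 0 < y := fun y hy ↦ hs y (mem_cons_of_mem hy)
  have h3 := esymm_three_le_esymm_one_mul_esymm_two fun y hy ↦ (ht y hy).le
  have e1 := esymm_pos ht (k := 1) (by simpa using hcard)
  simp only [esymm_cons_succ, esymm_zero_right]
  nlinarith [mul_pos (mul_pos ha ha) e1, mul_pos ha (mul_pos e1 e1)]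

theorem esymm_one_mul_esymm_four_lt (hs : ∀ y ∈ s, 0 < y) (hcard : 3 ≤ card s) :
    s.esymm 1 * s.esymm 4 < s.esymm 2 * s.esymm 3 := by
  obtain ⟨a, ha⟩ := card_pos_iff_exists_mem.1 (by omega : 0 < card s)
  obtain ⟨t, rfl⟩ := exists_cons_of_mem ha
  have ha : 0 < a := hs a (mem_cons_self a t)
  have ht : ∀ y ∈ t, 0 < y := fun y hy ↦ hs y (mem_cons_of_mem hy)
  have ht' : ∀ y ∈ t, 0 ≤ y := fun y hy ↦ (ht y hy).le
  have h3 := esymm_three_lt_esymm_one_mul_esymm_two ht (by simpa using hcard)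
  have h4 := esymm_four_le_esymm_two_sq ht'
  simp only [esymm_cons_succ, esymm_zero_right]
  nlinarith [esymm_one_mul_esymm_four_le ht', mul_le_mul_of_nonneg_left h4 ha.le,
    mul_lt_mul_of_pos_left h3 (mul_pos ha ha)]

end Multiset

theorem esymm_eq_multiset_esymm {n : ℕ} (x : Fin n → ℝ) (j : ℕ) :
    esymm x j = (univ.val.map x).esymm j :=
  (univ.esymm_map_val x j).symm

theorem esymm_sub_eq_prod_mul_esymm_inv {n k : ℕ} (x : Fin n → ℝ) (hx : ∀ i, x i ≠ 0)
    (hk : k ≤ n) : esymm x (n - k) = (∏ i, x i) * esymm x⁻¹ k := by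
  rw [esymm, esymm, mul_sum]
  refine sum_nbij' compl compl (fun s hs ↦ ?_) (fun s hs ↦ ?_) (fun s _ ↦ compl_compl s)
    (fun s _ ↦ compl_compl s) (fun s _ ↦ ?_)
  · simp_all [card_compl]
    omega
  · simp_all [card_compl]
  · rw [← prod_mul_prod_compl s x, Pi.inv_def, prod_inv_distrib, mul_assoc,
      mul_inv_cancel₀ (prod_ne_zero_iff.2 fun i _ ↦ hx i), mul_one]

/-- The key inequality in the proof of Theorem 1 (1): for `n ≥ 4` and positive
reals `x₁, …, xₙ`, one has `e_{n−1} e_{n−4} < e_{n−2} e_{n−3}`. -/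
theorem stmt17 (n : ℕ) (hn : 4 ≤ n) (x : Fin n → ℝ) (hx : ∀ i, 0 < x i) :
    esymm x (n - 1) * esymm x (n - 4) < esymm x (n - 2) * esymm x (n - 3) := by
  have hrev (k : ℕ) (hk : k ≤ n) := esymm_sub_eq_prod_mul_esymm_inv x (fun i ↦ (hx i).ne') hk
  rw [hrev 1 (by omega), hrev 2 (by omega), hrev 3 (by omega), hrev 4 (by omega)]
  simp only [esymm_eq_multiset_esymm]
  have key := Multiset.esymm_one_mul_esymm_four_lt (s := univ.val.map x⁻¹)
    (by simpa using fun i ↦ hx i) (by simpa using by omega)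
  have hP : 0 < (∏ i, x i) ^ 2 := pow_pos (prod_pos fun i _ ↦ hx i) 2
  linarith [mul_lt_mul_of_pos_left key hP]
end
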